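/- arXiv:1904.06700 — 8 statements merged into one kernel-verified Lean document; each statement's English description precedes it below -/
import Mathlib

section
/- Let V = {1,…,n+1} with n ≥ 2, let 2 ≤ k ≤ k+l ≤ n and let i_1,…,i_{k+l} be pairwise distinct elements of V. For 1 ≤ j ≤ k set S_j = {i_j, i_{j+1}, …, i_{k+l}} and let β = {S_1,…,S_k}. Then the collection B_β is a building set of the power set of V; that is, B_β contains every singleton {v} with v ∈ V, and for any S_1', S_2' ∈ B_β with S_1' ∩ S_2' ≠ ∅ one has S_1' ∪ S_2' ∈ B_β. -/
/-- `B_β` is a building set of the power set of `V = {1,…,n+1}`: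
it contains every singleton, and is closed under unions of intersecting members. -/
theorem stmt_0 (n k l : ℕ) (hn : 2 ≤ n) (hk : 2 ≤ k) (hkl : k + l ≤ n)
    (i : Fin (k + l) → Fin (n + 1)) (hi : Function.Injective i)
    (S : Fin k → Finset (Fin (n + 1)))
    (hS : ∀ j : Fin k, S j =
      Finset.image i (Finset.univ.filter fun t : Fin (k + l) => (j : ℕ) ≤ (t : ℕ)))
    (β : Finset (Finset (Fin (n + 1)))) (hβ : β = Finset.image S Finset.univ)
    (βmin βmax : Finset (Fin (n + 1)))
    (hβmin : βmin =
      Finset.image i (Finset.univ.filter fun t : Fin (k + l) => k - 1 ≤ (t : ℕ)))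
    (hβmax : βmax = Finset.image i Finset.univ)
    (Bβ : Finset (Finset (Fin (n + 1))))
    (hBβ : ∀ B : Finset (Fin (n + 1)), B ∈ Bβ ↔
      ((B.Nonempty ∧ (B ∈ β ∨ B ⊂ βmin ∨ βmax ⊂ B)) ∨ ∃ v : Fin (n + 1), B = {v})) :
    (∀ v : Fin (n + 1), ({v} : Finset (Fin (n + 1))) ∈ Bβ) ∧
      (∀ S₁ S₂ : Finset (Fin (n + 1)), S₁ ∈ Bβ → S₂ ∈ Bβ →
        (S₁ ∩ S₂).Nonempty → S₁ ∪ S₂ ∈ Bβ) := by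
  have hkpos : 0 < k := by omega
  have hmono : ∀ j1 j2 : Fin k, (j1 : ℕ) ≤ (j2 : ℕ) → S j2 ⊆ S j1 := by
    intro j1 j2 h
    rw [hS, hS]
    apply Finset.image_subset_image
    intro t ht
    simp only [Finset.mem_filter, Finset.mem_univ, true_and] at ht ⊢
    omega
  have hmin_eq : βmin = S ⟨k - 1, by omega⟩ := by
    rw [hβmin, hS]
  have hmin_mem : βmin ∈ β := by
    rw [hβ, hmin_eq]; exact Finset.mem_image_of_mem S (Finset.mem_univ _)
  have hmin_sub : ∀ j : Fin k, βmin ⊆ S j := by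
    intro j; rw [hmin_eq]
    exact hmono j _ (by have := j.isLt; simp; omega)
  have hmax_sup : ∀ j : Fin k, S j ⊆ βmax := by
    intro j; rw [hS, hβmax]
    exact Finset.image_subset_image (Finset.filter_subset _ _)
  have hminmax : βmin ⊆ βmax := (hmin_sub ⟨0, hkpos⟩).trans (hmax_sup _)
  refine ⟨fun v => (hBβ _).mpr (Or.inr ⟨v, rfl⟩), ?_⟩
  intro A B hA hB hAB
  rw [hBβ] at hA hB
  rcases hA with ⟨hAne, hA2⟩ | ⟨v, rfl⟩
  · rcases hB with ⟨hBne, hB2⟩ | ⟨w, rfl⟩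
    · -- main case
      have hUne : (A ∪ B).Nonempty := by
        obtain ⟨x, hx⟩ := hAne; exact ⟨x, Finset.mem_union_left _ hx⟩
      rw [hBβ]
      left
      refine ⟨hUne, ?_⟩
      rcases hA2 with hA2 | hA2 | hA2 <;> rcases hB2 with hB2 | hB2 | hB2
      · -- both in β
        rw [hβ, Finset.mem_image] at hA2 hB2
        obtain ⟨j1, -, hj1⟩ := hA2
        obtain ⟨j2, -, hj2⟩ := hB2
        rcases le_total (j1 : ℕ) (j2 : ℕ) with h | h
        · have : A ∪ B = A := Finset.union_eq_left.mpr
            (hj2 ▸ hj1 ▸ hmono j1 j2 h)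
          rw [this, hβ, ← hj1]
          exact Or.inl (Finset.mem_image_of_mem S (Finset.mem_univ _))
        · have : A ∪ B = B := Finset.union_eq_right.mpr
            (hj2 ▸ hj1 ▸ hmono j2 j1 h)
          rw [this, hβ, ← hj2]
          exact Or.inl (Finset.mem_image_of_mem S (Finset.mem_univ _))
      · -- A ∈ β, B ⊂ βmin
        rw [hβ, Finset.mem_image] at hA2
        obtain ⟨j, -, hj⟩ := hA2
        have : A ∪ B = A := Finset.union_eq_left.mpr
          (hB2.subset.trans (hj ▸ hmin_sub j))
        rw [this, ← hj]
        exact Or.inl (hβ ▸ Finset.mem_image_of_mem S (Finset.mem_univ _))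
      · -- A ∈ β, βmax ⊂ B
        rw [hβ, Finset.mem_image] at hA2
        obtain ⟨j, -, hj⟩ := hA2
        have : A ∪ B = B := Finset.union_eq_right.mpr
          (hj ▸ (hmax_sup j).trans hB2.subset)
        rw [this]
        exact Or.inr (Or.inr hB2)
      · -- A ⊂ βmin, B ∈ β
        rw [hβ, Finset.mem_image] at hB2
        obtain ⟨j, -, hj⟩ := hB2
        have : A ∪ B = B := Finset.union_eq_right.mpr
          (hA2.subset.trans (hj ▸ hmin_sub j))
        rw [this, ← hj]
        exact Or.inl (hβ ▸ Finset.mem_image_of_mem S (Finset.mem_univ _))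
      · -- both ⊂ βmin
        have hsub : A ∪ B ⊆ βmin := Finset.union_subset hA2.subset hB2.subset
        rcases eq_or_ne (A ∪ B) βmin with h | h
        · rw [h]; exact Or.inl hmin_mem
        · exact Or.inr (Or.inl (Finset.ssubset_iff_subset_ne.mpr ⟨hsub, h⟩))
      · -- A ⊂ βmin, βmax ⊂ B
        have : A ∪ B = B := Finset.union_eq_right.mpr
          ((hA2.subset.trans hminmax).trans hB2.subset)
        rw [this]
        exact Or.inr (Or.inr hB2)
      · -- βmax ⊂ A, B ∈ β
        rw [hβ, Finset.mem_image] at hB2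
        obtain ⟨j, -, hj⟩ := hB2
        have : A ∪ B = A := Finset.union_eq_left.mpr
          (hj ▸ (hmax_sup j).trans hA2.subset)
        rw [this]
        exact Or.inr (Or.inr hA2)
      · -- βmax ⊂ A, B ⊂ βmin
        have : A ∪ B = A := Finset.union_eq_left.mpr
          ((hB2.subset.trans hminmax).trans hA2.subset)
        rw [this]
        exact Or.inr (Or.inr hA2)
      · -- both ⊃ βmax
        refine Or.inr (Or.inr ?_)
        exact hA2.trans_subset Finset.subset_union_left
    · -- B = {w}
      obtain ⟨x, hx⟩ := hAB
      rw [Finset.mem_inter, Finset.mem_singleton] at hx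
      have hw : w ∈ A := hx.2 ▸ hx.1
      have : A ∪ {w} = A := Finset.union_eq_left.mpr
        (Finset.singleton_subset_iff.mpr hw)
      rw [this, hBβ]
      exact Or.inl ⟨hAne, hA2⟩
  · -- A = {v}
    obtain ⟨x, hx⟩ := hAB
    rw [Finset.mem_inter, Finset.mem_singleton] at hx
    have hv : v ∈ B := hx.1 ▸ hx.2
    have : ({v} : Finset (Fin (n + 1))) ∪ B = B := Finset.union_eq_right.mpr
      (Finset.singleton_subset_iff.mpr hv)
    rw [this, hBβ]
    exact hB
end

section
/- The nestohedron P_{B_β} (the Minkowski sum of the simplices Δ_A over all A ∈ B_β) has the halfspace description P_{B_β} = { x ∈ ℝ^{n+1} : x_1 + ⋯ + x_{n+1} = |B_β|, and for every A ∈ B_β with A ≠ V, ∑_{i∈A} x_i ≥ |B_{β|A}| }, where |B_β| is the number of members of B_β and |B_{β|A}| is the number of C ∈ B_β with C ⊆ A. -/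
open Pointwise

open Finset

variable {α : Type*} [DecidableEq α]

private lemma insert_inter_insert' (v : α) (S T : Finset α) :
    insert v S ∩ insert v T = insert v (S ∩ T) := by
  ext w; simp [Finset.mem_insert, Finset.mem_inter]; tauto

/-- Frank's discrete separation (sandwich) theorem, real-valued, on subsets of `U`. -/
theorem frank_sandwich : ∀ (U : Finset α) (p b : Finset α → ℝ),
    (∀ S ⊆ U, ∀ T ⊆ U, p S + p T ≤ p (S ∪ T) + p (S ∩ T)) →
    (∀ S ⊆ U, ∀ T ⊆ U, b (S ∪ T) + b (S ∩ T) ≤ b S + b T) →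
    p ∅ = 0 → b ∅ = 0 → (∀ S ⊆ U, p S ≤ b S) →
    ∃ x : α → ℝ, ∀ S ⊆ U, p S ≤ ∑ v ∈ S, x v ∧ ∑ v ∈ S, x v ≤ b S := by
  intro U
  induction U using Finset.strongInduction with
  | _ U ih =>
    intro p b hp hb hp0 hb0 hpb
    rcases U.eq_empty_or_nonempty with rfl | ⟨v, hv⟩
    · refine ⟨0, fun S hS => ?_⟩
      rw [Finset.subset_empty.mp hS]
      simp [hp0, hb0]
    · set U' := U.erase v with hU'def
      have hU'ss : U' ⊂ U := Finset.erase_ssubset hv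
      have hU'sub : U' ⊆ U := hU'ss.subset
      have hvU' : v ∉ U' := Finset.notMem_erase v U
      have hins : ∀ S ⊆ U', insert v S ⊆ U := by
        intro S hS
        exact Finset.insert_subset hv (hS.trans hU'sub)
      -- key crossing inequality
      have key : ∀ S ⊆ U', ∀ T ⊆ U', p (insert v S) - b S ≤ b (insert v T) - p T := by
        intro S hS T hT
        have hvS : v ∉ S := fun h => hvU' (hS h)
        have hvT : v ∉ T := fun h => hvU' (hT h)
        have h1 : p (insert v S) + p T ≤ p (insert v S ∪ T) + p (S ∩ T) := by
          have := hp (insert v S) (hins S hS) T (hT.trans hU'sub)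
          rwa [Finset.insert_inter_of_notMem hvT] at this
        have h2 : p (insert v S ∪ T) ≤ b (insert v S ∪ T) := by
          apply hpb
          exact Finset.union_subset (hins S hS) (hT.trans hU'sub)
        have h3 : p (S ∩ T) ≤ b (S ∩ T) := by
          apply hpb
          exact (Finset.inter_subset_left).trans (hS.trans hU'sub)
        have h4 : b (insert v S ∪ T) + b (S ∩ T) ≤ b (insert v T) + b S := by
          have h5 := hb (insert v T) (hins T hT) S (hS.trans hU'sub)
          rw [Finset.insert_union, Finset.insert_inter_of_notMem hvS,
            Finset.union_comm T S, Finset.inter_comm T S] at h5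
          rw [Finset.insert_union]
          linarith
        linarith
      have hpow : (U'.powerset).Nonempty := Finset.powerset_nonempty U'
      set t : ℝ := U'.powerset.inf' hpow (fun T => b (insert v T) - p T) with ht
      have ht_le : ∀ S ⊆ U', t ≤ b (insert v S) - p S := by
        intro S hS
        exact Finset.inf'_le _ (Finset.mem_powerset.mpr hS)
      have ht_ge : ∀ S ⊆ U', p (insert v S) - b S ≤ t := by
        intro S hS
        apply Finset.le_inf'
        intro T hT
        exact key S hS T (Finset.mem_powerset.mp hT)
      set p' : Finset α → ℝ := fun S => max (p S) (p (insert v S) - t) with hp'def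
      set b' : Finset α → ℝ := fun S => min (b S) (b (insert v S) - t) with hb'def
      have hp'0 : p' ∅ = 0 := by
        have h1 : p (insert v ∅) - b ∅ ≤ t := ht_ge ∅ (Finset.empty_subset _)
        rw [hb0] at h1
        simp only [hp'def, hp0]
        rw [max_eq_left (by linarith)]
      have hb'0 : b' ∅ = 0 := by
        have h1 : t ≤ b (insert v ∅) - p ∅ := ht_le ∅ (Finset.empty_subset _)
        rw [hp0] at h1
        simp only [hb'def, hb0]
        rw [min_eq_left (by linarith)]
      have hpb' : ∀ S ⊆ U', p' S ≤ b' S := by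
        intro S hS
        have h1 := ht_le S hS
        have h2 := ht_ge S hS
        have h3 := hpb S (hS.trans hU'sub)
        have h4 := hpb (insert v S) (hins S hS)
        simp only [hp'def, hb'def, max_le_iff, le_min_iff]
        refine ⟨⟨h3, ?_⟩, ⟨?_, ?_⟩⟩ <;> linarith
      have hp' : ∀ S ⊆ U', ∀ T ⊆ U', p' S + p' T ≤ p' (S ∪ T) + p' (S ∩ T) := by
        intro S hS T hT
        have hvS : v ∉ S := fun h => hvU' (hS h)
        have hvT : v ∉ T := fun h => hvU' (hT h)
        have hSU : S ⊆ U := hS.trans hU'sub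
        have hTU : T ⊆ U := hT.trans hU'sub
        have l1 : p (S ∪ T) ≤ p' (S ∪ T) := le_max_left _ _
        have l2 : p (insert v (S ∪ T)) - t ≤ p' (S ∪ T) := le_max_right _ _
        have l3 : p (S ∩ T) ≤ p' (S ∩ T) := le_max_left _ _
        have l4 : p (insert v (S ∩ T)) - t ≤ p' (S ∩ T) := le_max_right _ _
        rcases max_cases (p S) (p (insert v S) - t) with ⟨e1, _⟩ | ⟨e1, _⟩ <;>
          rcases max_cases (p T) (p (insert v T) - t) with ⟨e2, _⟩ | ⟨e2, _⟩ <;>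
          rw [show p' S = max (p S) (p (insert v S) - t) from rfl,
            show p' T = max (p T) (p (insert v T) - t) from rfl, e1, e2]
        · have := hp S hSU T hTU
          linarith
        · have h5 := hp S hSU (insert v T) (hins T hT)
          rw [Finset.union_insert, Finset.inter_comm S (insert v T),
            Finset.insert_inter_of_notMem hvS, Finset.inter_comm T S] at h5
          linarith
        · have h5 := hp (insert v S) (hins S hS) T hTU
          rw [Finset.insert_union, Finset.insert_inter_of_notMem hvT] at h5
          linarith
        · have h5 := hp (insert v S) (hins S hS) (insert v T) (hins T hT)
          rw [Finset.insert_union, Finset.union_insert, insert_inter_insert'] at h5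
          rw [show insert v (insert v (S ∪ T)) = insert v (S ∪ T) from Finset.insert_idem v _] at h5
          linarith
      have hb' : ∀ S ⊆ U', ∀ T ⊆ U', b' (S ∪ T) + b' (S ∩ T) ≤ b' S + b' T := by
        intro S hS T hT
        have hvS : v ∉ S := fun h => hvU' (hS h)
        have hvT : v ∉ T := fun h => hvU' (hT h)
        have hSU : S ⊆ U := hS.trans hU'sub
        have hTU : T ⊆ U := hT.trans hU'sub
        have l1 : b' (S ∪ T) ≤ b (S ∪ T) := min_le_left _ _
        have l2 : b' (S ∪ T) ≤ b (insert v (S ∪ T)) - t := min_le_right _ _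
        have l3 : b' (S ∩ T) ≤ b (S ∩ T) := min_le_left _ _
        have l4 : b' (S ∩ T) ≤ b (insert v (S ∩ T)) - t := min_le_right _ _
        rcases min_cases (b S) (b (insert v S) - t) with ⟨e1, _⟩ | ⟨e1, _⟩ <;>
          rcases min_cases (b T) (b (insert v T) - t) with ⟨e2, _⟩ | ⟨e2, _⟩ <;>
          rw [show b' S = min (b S) (b (insert v S) - t) from rfl,
            show b' T = min (b T) (b (insert v T) - t) from rfl, e1, e2]
        · have := hb S hSU T hTU
          linarith
        · have h5 := hb S hSU (insert v T) (hins T hT)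
          rw [Finset.union_insert, Finset.inter_comm S (insert v T),
            Finset.insert_inter_of_notMem hvS, Finset.inter_comm T S] at h5
          linarith
        · have h5 := hb (insert v S) (hins S hS) T hTU
          rw [Finset.insert_union, Finset.insert_inter_of_notMem hvT] at h5
          linarith
        · have h5 := hb (insert v S) (hins S hS) (insert v T) (hins T hT)
          rw [Finset.insert_union, Finset.union_insert, insert_inter_insert'] at h5
          rw [show insert v (insert v (S ∪ T)) = insert v (S ∪ T) from Finset.insert_idem v _] at h5
          linarith
      obtain ⟨y, hy⟩ := ih U' hU'ss p' b' hp' hb' hp'0 hb'0 hpb'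
      refine ⟨Function.update y v t, fun S hS => ?_⟩
      by_cases hvS : v ∈ S
      · have hSe : S.erase v ⊆ U' := Finset.erase_subset_erase v hS
        have hsum : ∑ w ∈ S, Function.update y v t w
            = t + ∑ w ∈ S.erase v, y w := by
          rw [← Finset.add_sum_erase S _ hvS, Function.update_self]
          congr 1
          apply Finset.sum_congr rfl
          intro w hw
          exact Function.update_of_ne (Finset.ne_of_mem_erase hw) _ _
        have h1 := (hy (S.erase v) hSe).1
        have h2 := (hy (S.erase v) hSe).2
        have hl : p (insert v (S.erase v)) - t ≤ p' (S.erase v) := le_max_right _ _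
        have hr : b' (S.erase v) ≤ b (insert v (S.erase v)) - t := min_le_right _ _
        rw [Finset.insert_erase hvS] at hl hr
        constructor <;> rw [hsum] <;> linarith
      · have hSe : S ⊆ U' := by
          intro w hw
          refine Finset.mem_erase.mpr ⟨?_, hS hw⟩
          rintro rfl; exact hvS hw
        have hsum : ∑ w ∈ S, Function.update y v t w = ∑ w ∈ S, y w := by
          apply Finset.sum_congr rfl
          intro w hw
          refine Function.update_of_ne ?_ _ _
          rintro rfl; exact hvS hw
        have h1 := (hy S hSe).1
        have h2 := (hy S hSe).2
        have hl : p S ≤ p' S := le_max_left _ _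
        have hr : b' S ≤ b S := min_le_left _ _
        constructor <;> rw [hsum] <;> linarith

open Finset Pointwise

variable {α : Type*} [Fintype α] [DecidableEq α]

noncomputable def simpA (A : Finset α) : Set (α → ℝ) :=
  convexHull ℝ ((fun i => Pi.single i (1 : ℝ)) '' (A : Set α))

theorem mem_simpA {A : Finset α} (hA : A.Nonempty) (x : α → ℝ) :
    x ∈ simpA A ↔ (∀ v, 0 ≤ x v) ∧ (∀ v ∉ A, x v = 0) ∧ ∑ v ∈ A, x v = 1 := by
  constructor
  · intro hx
    have hconv : Convex ℝ {y : α → ℝ | (∀ v, 0 ≤ y v) ∧ (∀ v ∉ A, y v = 0) ∧ ∑ v ∈ A, y v = 1} := by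
      intro y hy z hz a b ha hb hab
      refine ⟨fun v => by have := hy.1 v; have := hz.1 v; simp only [Pi.add_apply, Pi.smul_apply, smul_eq_mul]; nlinarith, ?_, ?_⟩
      · intro v hv
        simp only [Pi.add_apply, Pi.smul_apply, smul_eq_mul, hy.2.1 v hv, hz.2.1 v hv]
        ring
      · simp only [Pi.add_apply, Pi.smul_apply, smul_eq_mul]
        rw [Finset.sum_add_distrib, ← Finset.mul_sum, ← Finset.mul_sum, hy.2.2, hz.2.2]
        linarith
    refine convexHull_min ?_ hconv hx
    rintro - ⟨i, hi, rfl⟩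
    rw [Finset.mem_coe] at hi
    dsimp only
    refine ⟨fun v => ?_, fun v hv => ?_, ?_⟩
    · rw [Pi.single_apply]
      split <;> norm_num
    · rw [Pi.single_apply, if_neg]
      rintro rfl; exact hv hi
    · simp only [Pi.single_apply]
      rw [Finset.sum_ite_eq' A i (fun _ => (1:ℝ))]
      simp [hi]
  · rintro ⟨h1, h2, h3⟩
    have hx : x = A.centerMass x (fun v => Pi.single v (1:ℝ)) := by
      rw [Finset.centerMass_eq_of_sum_1 _ _ h3]
      funext w
      rw [Finset.sum_apply]
      simp only [Pi.smul_apply, smul_eq_mul, Pi.single_apply, mul_ite, mul_one, mul_zero]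
      rw [Finset.sum_ite_eq A w x]
      by_cases hw : w ∈ A
      · simp [hw]
      · simp [hw, h2 w hw]
    rw [hx]
    refine Finset.centerMass_mem_convexHull _ (fun v _ => h1 v) (by rw [h3]; norm_num) ?_
    intro v hv
    exact ⟨v, hv, rfl⟩

noncomputable def zfun (𝔅 : Finset (Finset α)) (S : Finset α) : ℝ :=
  ((𝔅.filter fun C => (C ∩ S).Nonempty).card : ℝ)

lemma zfun_empty (𝔅 : Finset (Finset α)) : zfun 𝔅 ∅ = 0 := by
  unfold zfun
  rw [Finset.filter_false_of_mem, Finset.card_empty, Nat.cast_zero]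
  intro C _
  simp

lemma zfun_insert {𝔅 : Finset (Finset α)} {A : Finset α} (hA : A ∉ 𝔅) (S : Finset α) :
    zfun (insert A 𝔅) S = zfun 𝔅 S + (if (A ∩ S).Nonempty then (1:ℝ) else 0) := by
  unfold zfun
  rw [Finset.filter_insert]
  split
  · rw [Finset.card_insert_of_notMem (fun h => hA (Finset.mem_filter.mp h).1)]
    push_cast; ring
  · ring

lemma ind_submod (C S T : Finset α) :
    (if (C ∩ (S ∪ T)).Nonempty then (1:ℝ) else 0) + (if (C ∩ (S ∩ T)).Nonempty then (1:ℝ) else 0)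
      ≤ (if (C ∩ S).Nonempty then (1:ℝ) else 0) + (if (C ∩ T).Nonempty then (1:ℝ) else 0) := by
  have hST : C ∩ (S ∩ T) ⊆ C ∩ S := by
    intro w hw
    simp only [Finset.mem_inter] at hw ⊢
    exact ⟨hw.1, hw.2.1⟩
  have hU : C ∩ (S ∪ T) = (C ∩ S) ∪ (C ∩ T) := Finset.inter_union_distrib_left C S T
  by_cases h1 : (C ∩ S).Nonempty <;> by_cases h2 : (C ∩ T).Nonempty
  · rw [if_pos h1, if_pos h2]
    split <;> split <;> norm_num
  · have h3 : ¬(C ∩ (S ∩ T)).Nonempty := by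
      rw [Finset.inter_comm S T]
      intro h
      exact h2 (h.mono (by intro w hw; simp only [Finset.mem_inter] at hw ⊢; exact ⟨hw.1, hw.2.1⟩))
    rw [if_pos h1, if_neg h2, if_neg h3, hU]
    split <;> norm_num
  · have h3 : ¬(C ∩ (S ∩ T)).Nonempty := fun h => h1 (h.mono hST)
    rw [if_neg h1, if_pos h2, if_neg h3, hU]
    split <;> norm_num
  · have h3 : ¬(C ∩ (S ∩ T)).Nonempty := fun h => h1 (h.mono hST)
    have h4 : ¬(C ∩ (S ∪ T)).Nonempty := by
      rw [hU]
      rw [Finset.not_nonempty_iff_eq_empty] at h1 h2 ⊢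
      rw [h1, h2, Finset.union_empty]
    rw [if_neg h1, if_neg h2, if_neg h3, if_neg h4]

lemma zfun_eq_sum (𝔅 : Finset (Finset α)) (S : Finset α) :
    zfun 𝔅 S = ∑ C ∈ 𝔅, (if (C ∩ S).Nonempty then (1:ℝ) else 0) := by
  unfold zfun
  rw [Finset.card_filter]
  push_cast
  rfl

lemma zfun_submod (𝔅 : Finset (Finset α)) (S T : Finset α) :
    zfun 𝔅 (S ∪ T) + zfun 𝔅 (S ∩ T) ≤ zfun 𝔅 S + zfun 𝔅 T := by
  simp only [zfun_eq_sum]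
  rw [← Finset.sum_add_distrib, ← Finset.sum_add_distrib]
  exact Finset.sum_le_sum (fun C _ => ind_submod C S T)

lemma zfun_bot (S : Finset α) : zfun (∅ : Finset (Finset α)) S = 0 := by
  simp [zfun]

lemma easy_direction : ∀ (𝔅 : Finset (Finset α)), (∀ C ∈ 𝔅, C.Nonempty) →
    ∀ x : α → ℝ, x ∈ ∑ C ∈ 𝔅, simpA C →
    (∑ v, x v) = (𝔅.card : ℝ) ∧ ∀ S : Finset α, ∑ v ∈ S, x v ≤ zfun 𝔅 S := by
  intro 𝔅
  induction 𝔅 using Finset.induction_on with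
  | empty =>
    intro _ x hx
    rw [Finset.sum_empty, Set.mem_zero] at hx
    subst hx
    simp [zfun_bot]
  | @insert A 𝔅 hA ihind =>
    intro hne x hx
    rw [Finset.sum_insert hA, Set.mem_add] at hx
    obtain ⟨p, hp, y, hy, rfl⟩ := hx
    obtain ⟨hy1, hy2⟩ := ihind (fun C hC => hne C (Finset.mem_insert_of_mem hC)) y hy
    have hAne : A.Nonempty := hne A (Finset.mem_insert_self A 𝔅)
    rw [mem_simpA hAne] at hp
    obtain ⟨hp1, hp2, hp3⟩ := hp
    have hpuniv : ∑ v, p v = 1 := by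
      rw [← Finset.sum_subset (Finset.subset_univ A) (fun v _ hv => hp2 v hv)]
      exact hp3
    constructor
    · simp only [Pi.add_apply, Finset.sum_add_distrib]
      rw [hpuniv, hy1, Finset.card_insert_of_notMem hA]
      push_cast; ring
    · intro S
      simp only [Pi.add_apply, Finset.sum_add_distrib]
      rw [zfun_insert hA]
      have hps : ∑ v ∈ S, p v ≤ (if (A ∩ S).Nonempty then (1:ℝ) else 0) := by
        split
        · calc ∑ v ∈ S, p v ≤ ∑ v, p v :=
                Finset.sum_le_sum_of_subset_of_nonneg (Finset.subset_univ S)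
                  (fun v _ _ => hp1 v)
            _ = 1 := hpuniv
        · next h =>
          rw [Finset.not_nonempty_iff_eq_empty] at h
          have : ∀ v ∈ S, p v = 0 := by
            intro v hv
            refine hp2 v ?_
            intro hvA
            have : v ∈ A ∩ S := Finset.mem_inter.mpr ⟨hvA, hv⟩
            rw [h] at this
            exact absurd this (Finset.notMem_empty v)
          rw [Finset.sum_congr rfl this]
          simp
      have := hy2 S
      linarith

lemma hard_direction : ∀ (𝔅 : Finset (Finset α)), (∀ C ∈ 𝔅, C.Nonempty) →
    ∀ x : α → ℝ, (∑ v, x v) = (𝔅.card : ℝ) → (∀ S : Finset α, ∑ v ∈ S, x v ≤ zfun 𝔅 S) →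
    x ∈ ∑ C ∈ 𝔅, simpA C := by
  intro 𝔅
  induction 𝔅 using Finset.induction_on with
  | empty =>
    intro _ x hx1 hx2
    rw [Finset.sum_empty, Set.mem_zero]
    funext v
    have h1 : x v ≤ 0 := by
      have := hx2 {v}
      rw [zfun_bot] at this
      simpa using this
    have h2 : ∑ w ∈ Finset.univ.erase v, x w ≤ 0 := by
      have := hx2 (Finset.univ.erase v)
      rw [zfun_bot] at this
      exact this
    have h3 : x v + ∑ w ∈ Finset.univ.erase v, x w = 0 := by
      rw [Finset.add_sum_erase _ _ (Finset.mem_univ v), hx1]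
      simp
    have : x v = 0 := by linarith
    simpa using this
  | @insert A 𝔅 hA ihind =>
    intro hne x hx1 hx2
    have hAne : A.Nonempty := hne A (Finset.mem_insert_self A 𝔅)
    have hne' : ∀ C ∈ 𝔅, C.Nonempty := fun C hC => hne C (Finset.mem_insert_of_mem hC)
    -- the sandwich bounds
    set q : Finset α → ℝ := fun S => (∑ v ∈ S, x v) - zfun 𝔅 S with hq
    set yA : Finset α → ℝ := fun S => if (A ∩ S).Nonempty then (1:ℝ) else 0 with hyA
    have hqsup : ∀ S ⊆ (Finset.univ : Finset α), ∀ T ⊆ Finset.univ,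
        q S + q T ≤ q (S ∪ T) + q (S ∩ T) := by
      intro S _ T _
      have hmod : ∑ v ∈ S ∪ T, x v + ∑ v ∈ S ∩ T, x v = ∑ v ∈ S, x v + ∑ v ∈ T, x v :=
        Finset.sum_union_inter
      have := zfun_submod 𝔅 S T
      simp only [hq]
      linarith
    have hyAsub : ∀ S ⊆ (Finset.univ : Finset α), ∀ T ⊆ Finset.univ,
        yA (S ∪ T) + yA (S ∩ T) ≤ yA S + yA T := by
      intro S _ T _
      exact ind_submod A S T
    have hq0 : q ∅ = 0 := by simp [hq, zfun_empty]
    have hyA0 : yA ∅ = 0 := by simp [hyA]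
    have hqyA : ∀ S ⊆ (Finset.univ : Finset α), q S ≤ yA S := by
      intro S _
      have := hx2 S
      rw [zfun_insert hA] at this
      simp only [hq, hyA]
      linarith
    obtain ⟨p, hp⟩ := frank_sandwich Finset.univ q yA hqsup hyAsub hq0 hyA0 hqyA
    have hps : ∀ S : Finset α, q S ≤ ∑ v ∈ S, p v ∧ ∑ v ∈ S, p v ≤ yA S :=
      fun S => hp S (Finset.subset_univ S)
    -- facts about p
    have hzuniv : zfun 𝔅 Finset.univ = (𝔅.card : ℝ) := by
      unfold zfun
      congr 2
      rw [Finset.filter_true_of_mem]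
      intro C hC
      rw [Finset.inter_univ]
      exact hne' C hC
    have hyA_le_one : ∀ S, yA S ≤ 1 := by
      intro S; simp only [hyA]; split <;> norm_num
    have hpuniv : ∑ v, p v = 1 := by
      have h1 := (hps Finset.univ).1
      have h2 := (hps Finset.univ).2
      have hcard : ((insert A 𝔅).card : ℝ) = (𝔅.card : ℝ) + 1 := by
        rw [Finset.card_insert_of_notMem hA]; push_cast; ring
      have hqu : q Finset.univ = 1 := by
        simp only [hq]
        rw [hx1, hzuniv, hcard]; ring
      have hyu : yA Finset.univ = 1 := by
        simp only [hyA]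
        rw [Finset.inter_univ, if_pos hAne]
      rw [hqu] at h1
      rw [hyu] at h2
      linarith
    have hpnn : ∀ v, 0 ≤ p v := by
      intro v
      have h2 := (hps (Finset.univ.erase v)).2
      have h3 : p v + ∑ w ∈ Finset.univ.erase v, p w = 1 := by
        rw [Finset.add_sum_erase _ _ (Finset.mem_univ v), hpuniv]
      have := hyA_le_one (Finset.univ.erase v)
      linarith
    have hpz : ∀ v ∉ A, p v = 0 := by
      intro v hv
      have h2 := (hps {v}).2
      have hAv : ¬(A ∩ {v}).Nonempty := by
        rw [Finset.not_nonempty_iff_eq_empty]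
        rw [Finset.eq_empty_iff_forall_notMem]
        intro w hw
        rw [Finset.mem_inter, Finset.mem_singleton] at hw
        exact hv (hw.2 ▸ hw.1)
      rw [show yA {v} = 0 from by simp only [hyA]; rw [if_neg hAv]] at h2
      rw [Finset.sum_singleton] at h2
      exact le_antisymm h2 (hpnn v)
    have hpA : ∑ v ∈ A, p v = 1 := by
      rw [Finset.sum_subset (Finset.subset_univ A) (fun v _ hv => hpz v hv)]
      exact hpuniv
    have hpmem : p ∈ simpA A := (mem_simpA hAne p).mpr ⟨hpnn, hpz, hpA⟩
    -- x - p works for 𝔅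
    have hxp : (x - p) ∈ ∑ C ∈ 𝔅, simpA C := by
      refine ihind hne' (x - p) ?_ ?_
      · simp only [Pi.sub_apply, Finset.sum_sub_distrib]
        rw [hx1, hpuniv, Finset.card_insert_of_notMem hA]
        push_cast; ring
      · intro S
        have h1 := (hps S).1
        simp only [Pi.sub_apply, Finset.sum_sub_distrib]
        simp only [hq] at h1
        linarith
    rw [Finset.sum_insert hA, Set.mem_add]
    exact ⟨p, hpmem, x - p, hxp, by funext v; simp⟩

noncomputable def gfun (𝔅 : Finset (Finset α)) (T : Finset α) : ℝ :=
  ((𝔅.filter fun C => C ⊆ T).card : ℝ)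

lemma zfun_eq_card_sub_gfun (𝔅 : Finset (Finset α)) (S : Finset α) :
    zfun 𝔅 S = (𝔅.card : ℝ) - gfun 𝔅 (Finset.univ \ S) := by
  have hsplit := Finset.card_filter_add_card_filter_not
    (s := 𝔅) (p := fun C => (C ∩ S).Nonempty)
  have hg : gfun 𝔅 (Finset.univ \ S)
      = ((𝔅.filter fun C => ¬(C ∩ S).Nonempty).card : ℝ) := by
    unfold gfun
    congr 2
    apply Finset.filter_congr
    intro C _
    rw [Finset.subset_sdiff, Finset.not_nonempty_iff_eq_empty,
      ← Finset.disjoint_iff_inter_eq_empty]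
    simp [Finset.subset_univ]
  unfold zfun
  rw [hg]
  have : ((𝔅.filter fun C => (C ∩ S).Nonempty).card : ℝ)
      + ((𝔅.filter fun C => ¬(C ∩ S).Nonempty).card : ℝ) = (𝔅.card : ℝ) := by
    push_cast [← hsplit]; ring
  linarith

lemma bridge (𝔅 : Finset (Finset α)) (x : α → ℝ) (hx1 : ∑ v, x v = (𝔅.card : ℝ)) :
    (∀ S : Finset α, ∑ v ∈ S, x v ≤ zfun 𝔅 S)
      ↔ (∀ T : Finset α, gfun 𝔅 T ≤ ∑ v ∈ T, x v) := by
  constructor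
  · intro h T
    have h1 := h (Finset.univ \ T)
    rw [zfun_eq_card_sub_gfun] at h1
    rw [show Finset.univ \ (Finset.univ \ T) = T from by
      rw [Finset.sdiff_sdiff_self_left, Finset.univ_inter]] at h1
    have h2 : ∑ v ∈ Finset.univ \ T, x v + ∑ v ∈ T, x v = (𝔅.card : ℝ) := by
      rw [Finset.sum_sdiff (Finset.subset_univ T), hx1]
    linarith
  · intro h S
    have h1 := h (Finset.univ \ S)
    rw [zfun_eq_card_sub_gfun]
    have h2 : ∑ v ∈ Finset.univ \ S, x v + ∑ v ∈ S, x v = (𝔅.card : ℝ) := by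
      rw [Finset.sum_sdiff (Finset.subset_univ S), hx1]
    linarith

lemma key_lower (𝔅 : Finset (Finset α)) (hne : ∀ C ∈ 𝔅, C.Nonempty)
    (hsing : ∀ v : α, {v} ∈ 𝔅)
    (hcl : ∀ B ∈ 𝔅, ∀ C ∈ 𝔅, (B ∩ C).Nonempty → B ∪ C ∈ 𝔅)
    (x : α → ℝ) (hx1 : ∑ v, x v = (𝔅.card : ℝ))
    (hA : ∀ A ∈ 𝔅, A ≠ Finset.univ → gfun 𝔅 A ≤ ∑ v ∈ A, x v) :
    ∀ T : Finset α, gfun 𝔅 T ≤ ∑ v ∈ T, x v := by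
  intro T
  induction T using Finset.strongInduction with
  | _ T ih =>
    rcases T.eq_empty_or_nonempty with rfl | hTne
    · have : gfun 𝔅 ∅ = 0 := by
        unfold gfun
        rw [Finset.filter_false_of_mem, Finset.card_empty, Nat.cast_zero]
        intro C hC h
        exact absurd (Finset.subset_empty.mp h) (hne C hC).ne_empty
      rw [this, Finset.sum_empty]
    · by_cases hTu : T = Finset.univ
      · subst hTu
        have : gfun 𝔅 Finset.univ = (𝔅.card : ℝ) := by
          unfold gfun
          rw [Finset.filter_true_of_mem (fun C _ => Finset.subset_univ C)]
        rw [this, hx1]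
      · by_cases hT𝔅 : T ∈ 𝔅
        · exact hA T hT𝔅 hTu
        · obtain ⟨t, ht⟩ := hTne
          have hF : (𝔅.filter fun C => C ⊆ T).Nonempty :=
            ⟨{t}, Finset.mem_filter.mpr ⟨hsing t, Finset.singleton_subset_iff.mpr ht⟩⟩
          obtain ⟨C, hCF, hmax⟩ := Finset.exists_max_image _ Finset.card hF
          rw [Finset.mem_filter] at hCF
          obtain ⟨hC𝔅, hCT⟩ := hCF
          have hCne : C.Nonempty := hne C hC𝔅
          have hCu : C ≠ Finset.univ := by
            rintro rfl
            exact hTu (Finset.univ_subset_iff.mp hCT)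
          -- every D ∈ 𝔅 with D ⊆ T is inside C or inside T \ C
          have hsplit : ∀ D ∈ 𝔅, D ⊆ T → (D ⊆ C ∨ D ⊆ T \ C) := by
            intro D hD𝔅 hDT
            by_cases hDC : (D ∩ C).Nonempty
            · left
              have hun : D ∪ C ∈ 𝔅 := hcl D hD𝔅 C hC𝔅 hDC
              have hunT : D ∪ C ⊆ T := Finset.union_subset hDT hCT
              have hle : (D ∪ C).card ≤ C.card :=
                hmax (D ∪ C) (Finset.mem_filter.mpr ⟨hun, hunT⟩)
              have heq : C = D ∪ C :=
                Finset.eq_of_subset_of_card_le Finset.subset_union_right hle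
              rw [heq]
              exact Finset.subset_union_left
            · right
              intro w hw
              rw [Finset.mem_sdiff]
              refine ⟨hDT hw, fun hwC => hDC ⟨w, Finset.mem_inter.mpr ⟨hw, hwC⟩⟩⟩
          have hfeq : 𝔅.filter (fun D => D ⊆ T)
              = 𝔅.filter (fun D => D ⊆ C) ∪ 𝔅.filter (fun D => D ⊆ T \ C) := by
            ext D
            simp only [Finset.mem_filter, Finset.mem_union]
            constructor
            · rintro ⟨hD, hDT⟩
              rcases hsplit D hD hDT with h | h
              · exact Or.inl ⟨hD, h⟩
              · exact Or.inr ⟨hD, h⟩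
            · rintro (⟨hD, h⟩ | ⟨hD, h⟩)
              · exact ⟨hD, h.trans hCT⟩
              · exact ⟨hD, h.trans (Finset.sdiff_subset)⟩
          have hdisj : Disjoint (𝔅.filter (fun D => D ⊆ C)) (𝔅.filter (fun D => D ⊆ T \ C)) := by
            rw [Finset.disjoint_left]
            intro D hD1 hD2
            rw [Finset.mem_filter] at hD1 hD2
            obtain ⟨d, hd⟩ := hne D hD1.1
            have h1 : d ∈ C := hD1.2 hd
            have h2 : d ∈ T \ C := hD2.2 hd
            rw [Finset.mem_sdiff] at h2
            exact h2.2 h1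
          have hgsum : gfun 𝔅 T = gfun 𝔅 C + gfun 𝔅 (T \ C) := by
            unfold gfun
            rw [hfeq, Finset.card_union_of_disjoint hdisj]
            push_cast; ring
          have hxsum : ∑ v ∈ T \ C, x v + ∑ v ∈ C, x v = ∑ v ∈ T, x v :=
            Finset.sum_sdiff hCT
          have hihd := ih (T \ C) (Finset.sdiff_ssubset hCT hCne)
          have hAC := hA C hC𝔅 hCu
          rw [hgsum]
          linarith

/-- The simplex `Δ_A = conv{e_i : i ∈ A}` in `ℝ^{n+1}`. -/
noncomputable def simplexOf {n : ℕ} (A : Finset (Fin (n + 1))) : Set (Fin (n + 1) → ℝ) :=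
  convexHull ℝ ((fun i => Pi.single i (1 : ℝ)) '' (A : Set (Fin (n + 1))))

/-- the halfspace description of the nestohedron
`P_{B_β} = ∑_{A ∈ B_β} Δ_A`. -/
theorem stmt_1 (n k l : ℕ) (hn : 2 ≤ n) (hk : 2 ≤ k) (hkl : k + l ≤ n)
    (i : Fin (k + l) → Fin (n + 1)) (hi : Function.Injective i)
    (S : Fin k → Finset (Fin (n + 1)))
    (hS : ∀ j : Fin k, S j =
      Finset.image i (Finset.univ.filter fun t : Fin (k + l) => (j : ℕ) ≤ (t : ℕ)))
    (β : Finset (Finset (Fin (n + 1)))) (hβ : β = Finset.image S Finset.univ)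
    (βmin βmax : Finset (Fin (n + 1)))
    (hβmin : βmin =
      Finset.image i (Finset.univ.filter fun t : Fin (k + l) => k - 1 ≤ (t : ℕ)))
    (hβmax : βmax = Finset.image i Finset.univ)
    (Bβ : Finset (Finset (Fin (n + 1))))
    (hBβ : ∀ B : Finset (Fin (n + 1)), B ∈ Bβ ↔
      ((B.Nonempty ∧ (B ∈ β ∨ B ⊂ βmin ∨ βmax ⊂ B)) ∨ ∃ v : Fin (n + 1), B = {v})) :
    (∑ A ∈ Bβ, simplexOf A) =
      {x : Fin (n + 1) → ℝ | (∑ j, x j) = (Bβ.card : ℝ) ∧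
        ∀ A ∈ Bβ, A ≠ Finset.univ →
          ((Bβ.filter (· ⊆ A)).card : ℝ) ≤ ∑ j ∈ A, x j} := by
  have hkl2 : 2 ≤ k + l := le_trans hk (Nat.le_add_right k l)
  -- structural facts about the chain
  have hchain_mono : ∀ j j' : Fin k, (j : ℕ) ≤ (j' : ℕ) → S j' ⊆ S j := by
    intro j j' hjj
    rw [hS j, hS j']
    apply Finset.image_subset_image
    intro t ht
    rw [Finset.mem_filter] at ht ⊢
    exact ⟨ht.1, le_trans hjj ht.2⟩
  have hmin_sub : ∀ j : Fin k, βmin ⊆ S j := by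
    intro j
    rw [hβmin, hS j]
    apply Finset.image_subset_image
    intro t ht
    rw [Finset.mem_filter] at ht ⊢
    refine ⟨ht.1, le_trans ?_ ht.2⟩
    have := j.isLt
    omega
  have hsub_max : ∀ j : Fin k, S j ⊆ βmax := by
    intro j
    rw [hS j, hβmax]
    exact Finset.image_subset_image (Finset.filter_subset _ _)
  have hmin_mem : βmin ∈ β := by
    have : βmin = S ⟨k - 1, by omega⟩ := by
      rw [hS]
      exact hβmin
    rw [this, hβ]
    exact Finset.mem_image_of_mem S (Finset.mem_univ _)
  have hminne : βmin.Nonempty := by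
    refine ⟨i ⟨k + l - 1, by omega⟩, ?_⟩
    rw [hβmin]
    refine Finset.mem_image_of_mem i (Finset.mem_filter.mpr ⟨Finset.mem_univ _, ?_⟩)
    simp
    omega
  have hβne : ∀ D ∈ β, D.Nonempty := by
    intro D hD
    rw [hβ] at hD
    obtain ⟨j, _, rfl⟩ := Finset.mem_image.mp hD
    exact hminne.mono (hmin_sub j)
  have hmin_max : βmin ⊆ βmax := (hmin_sub ⟨0, by omega⟩).trans (hsub_max _)
  -- membership facts for Bβ
  have hne : ∀ B ∈ Bβ, B.Nonempty := by
    intro B hB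
    rcases (hBβ B).1 hB with ⟨h, _⟩ | ⟨v, rfl⟩
    · exact h
    · exact ⟨v, Finset.mem_singleton_self v⟩
  have hsing : ∀ v : Fin (n + 1), {v} ∈ Bβ := fun v => (hBβ {v}).2 (Or.inr ⟨v, rfl⟩)
  have hmaxcard : βmax.card = k + l := by
    rw [hβmax, Finset.card_image_of_injective _ hi, Finset.card_univ, Fintype.card_fin]
  have hmaxssu : βmax ⊂ Finset.univ := by
    rw [Finset.ssubset_univ_iff]
    intro h
    have : βmax.card = n + 1 := by rw [h, Finset.card_univ, Fintype.card_fin]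
    omega
  have huniv : Finset.univ ∈ Bβ :=
    (hBβ Finset.univ).2 (Or.inl ⟨Finset.univ_nonempty, Or.inr (Or.inr hmaxssu)⟩)
  -- membership constructor for non-singleton classes
  have hmem : ∀ D : Finset (Fin (n + 1)), D.Nonempty →
      (D ∈ β ∨ D ⊂ βmin ∨ βmax ⊂ D) → D ∈ Bβ := by
    intro D h1 h2
    exact (hBβ D).2 (Or.inl ⟨h1, h2⟩)
  have hunion_mem : ∀ B C : Finset (Fin (n + 1)), B.Nonempty →
      (B ∈ β ∨ B ⊂ βmin ∨ βmax ⊂ B) → (C ∈ β ∨ C ⊂ βmin ∨ βmax ⊂ C) → B ∪ C ∈ Bβ := by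
    intro B C hBne' hB hC
    have hUne : (B ∪ C).Nonempty := hBne'.mono Finset.subset_union_left
    rcases hB with hB | hB | hB
    · obtain ⟨j, _, hj⟩ := Finset.mem_image.mp (hβ ▸ hB)
      rcases hC with hC | hC | hC
      · obtain ⟨j', _, hj'⟩ := Finset.mem_image.mp (hβ ▸ hC)
        rcases le_total (j : ℕ) (j' : ℕ) with h | h
        · rw [Finset.union_eq_left.mpr (hj' ▸ hj ▸ hchain_mono j j' h : C ⊆ B)]
          exact hmem B hBne' (Or.inl hB)
        · rw [Finset.union_eq_right.mpr (hj ▸ hj' ▸ hchain_mono j' j h : B ⊆ C)]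
          exact hmem C (hβne C hC) (Or.inl hC)
      · rw [Finset.union_eq_left.mpr (hC.subset.trans (hj ▸ hmin_sub j : βmin ⊆ B))]
        exact hmem B hBne' (Or.inl hB)
      · rw [Finset.union_eq_right.mpr ((hj ▸ hsub_max j : B ⊆ βmax).trans hC.subset)]
        exact hmem C (hminne.mono (hmin_max.trans hC.subset)) (Or.inr (Or.inr hC))
    · rcases hC with hC | hC | hC
      · obtain ⟨j', _, hj'⟩ := Finset.mem_image.mp (hβ ▸ hC)
        rw [Finset.union_eq_right.mpr (hB.subset.trans (hj' ▸ hmin_sub j' : βmin ⊆ C))]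
        exact hmem C (hβne C hC) (Or.inl hC)
      · have hsub : B ∪ C ⊆ βmin := Finset.union_subset hB.subset hC.subset
        by_cases heq : B ∪ C = βmin
        · rw [heq]
          exact hmem βmin hminne (Or.inl hmin_mem)
        · exact hmem _ hUne (Or.inr (Or.inl (Finset.ssubset_iff_subset_ne.mpr ⟨hsub, heq⟩)))
      · rw [Finset.union_eq_right.mpr ((hB.subset.trans hmin_max).trans hC.subset)]
        exact hmem C (hminne.mono (hmin_max.trans hC.subset)) (Or.inr (Or.inr hC))
    · rcases hC with hC | hC | hC
      · obtain ⟨j', _, hj'⟩ := Finset.mem_image.mp (hβ ▸ hC)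
        rw [Finset.union_eq_left.mpr ((hj' ▸ hsub_max j' : C ⊆ βmax).trans hB.subset)]
        exact hmem B hBne' (Or.inr (Or.inr hB))
      · rw [Finset.union_eq_left.mpr ((hC.subset.trans hmin_max).trans hB.subset)]
        exact hmem B hBne' (Or.inr (Or.inr hB))
      · refine hmem _ hUne (Or.inr (Or.inr ?_))
        exact Finset.ssubset_iff_subset_ne.mpr
          ⟨hB.subset.trans Finset.subset_union_left,
           fun h => hB.ne (le_antisymm (h ▸ Finset.subset_union_left : B ⊆ βmax) hB.subset).symm⟩
  have hcl : ∀ B ∈ Bβ, ∀ C ∈ Bβ, (B ∩ C).Nonempty → B ∪ C ∈ Bβ := by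
    intro B hB C hC hint
    rcases (hBβ B).1 hB with ⟨hBne', hBc⟩ | ⟨v, rfl⟩
    · rcases (hBβ C).1 hC with ⟨hCne', hCc⟩ | ⟨w, rfl⟩
      · exact hunion_mem B C hBne' hBc hCc
      · obtain ⟨u, hu⟩ := hint
        rw [Finset.mem_inter, Finset.mem_singleton] at hu
        have hwB : w ∈ B := hu.2 ▸ hu.1
        rw [Finset.union_eq_left.mpr (Finset.singleton_subset_iff.mpr hwB)]
        exact hB
    · obtain ⟨u, hu⟩ := hint
      rw [Finset.mem_inter, Finset.mem_singleton] at hu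
      have hvC : v ∈ C := hu.1 ▸ hu.2
      rw [Finset.union_eq_right.mpr (Finset.singleton_subset_iff.mpr hvC)]
      exact hC
  -- final assembly
  have hsimp : (∑ A ∈ Bβ, simplexOf A) = ∑ A ∈ Bβ, simpA A := rfl
  ext x
  simp only [Set.mem_setOf_eq]
  constructor
  · intro hx
    rw [hsimp] at hx
    obtain ⟨h1, h2⟩ := easy_direction Bβ hne x hx
    refine ⟨h1, fun A hA hAu => ?_⟩
    exact (bridge Bβ x h1).1 h2 A
  · rintro ⟨h1, h2⟩
    rw [hsimp]
    apply hard_direction Bβ hne x h1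
    rw [bridge Bβ x h1]
    exact key_lower Bβ hne hsing hcl x h1 (fun A hA hAu => h2 A hA hAu)
end

section
/- For every point x of the nestohedron P_{B_β} one has κ_β(x) ≥ m_β, and κ_β(x) = m_β holds if and only if ∑_{i ∈ S_j} x_i = |B_{β|S_j}| for every j ∈ {1,…,k}. Consequently the minimum of κ_β over P_{B_β} is m_β and its set of minimizers is the face F_β := { x ∈ P_{B_β} : ∑_{i∈S_j} x_i = |B_{β|S_j}| for all j }. -/
open Pointwise

lemma simplexOf_props {n : ℕ} {A : Finset (Fin (n + 1))} {y : Fin (n + 1) → ℝ}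
    (hy : y ∈ simplexOf A) :
    (∀ t, 0 ≤ y t) ∧ (∀ t, t ∉ A → y t = 0) ∧ ∑ t, y t = 1 := by
  classical
  have hconv : Convex ℝ {y : Fin (n + 1) → ℝ |
      (∀ t, 0 ≤ y t) ∧ (∀ t, t ∉ A → y t = 0) ∧ ∑ t, y t = 1} := by
    rintro a ha b hb p q hp hq hpq
    refine ⟨fun t => add_nonneg (mul_nonneg hp (ha.1 t)) (mul_nonneg hq (hb.1 t)),
      fun t ht => by simp [Pi.add_apply, ha.2.1 t ht, hb.2.1 t ht], ?_⟩
    simp only [Pi.add_apply, Pi.smul_apply, smul_eq_mul]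
    rw [Finset.sum_add_distrib, ← Finset.mul_sum, ← Finset.mul_sum, ha.2.2, hb.2.2]
    linarith
  refine convexHull_min ?_ hconv hy
  rintro _ ⟨w, hw, rfl⟩
  refine ⟨fun t => ?_, fun t ht => ?_, ?_⟩
  · rcases eq_or_ne t w with rfl | h
    · simp
    · simp [Pi.single_apply, h]
  · have hne : t ≠ w := fun h => ht (h ▸ hw)
    simp [Pi.single_apply, hne]
  · simp [Fintype.sum_pi_single' w (1 : ℝ)]

lemma simplexOf_sum_eq_one {n : ℕ} {A B : Finset (Fin (n + 1))} {y : Fin (n + 1) → ℝ}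
    (hy : y ∈ simplexOf A) (hAB : A ⊆ B) : ∑ t ∈ B, y t = 1 := by
  obtain ⟨-, h0, h1⟩ := simplexOf_props hy
  rw [Finset.sum_subset B.subset_univ (fun t _ htB => h0 t (fun hA => htB (hAB hA)))]
  exact h1

lemma simplexOf_sum_ge {n : ℕ} {A B : Finset (Fin (n + 1))} {y : Fin (n + 1) → ℝ}
    (hy : y ∈ simplexOf A) [Decidable (A ⊆ B)] :
    (if A ⊆ B then (1 : ℝ) else 0) ≤ ∑ t ∈ B, y t := by
  by_cases h : A ⊆ B
  · rw [if_pos h, simplexOf_sum_eq_one hy h]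
  · rw [if_neg h]
    exact Finset.sum_nonneg fun t _ => (simplexOf_props hy).1 t

/-- on the nestohedron `P_{B_β}` one has `κ_β ≥ m_β`, with equality
exactly on the face `F_β`; hence the minimum of `κ_β` over `P_{B_β}` is `m_β` and
its set of minimizers is `F_β`. -/
theorem stmt_2 (n k l : ℕ) (hn : 2 ≤ n) (hk : 2 ≤ k) (hkl : k + l ≤ n)
    (i : Fin (k + l) → Fin (n + 1)) (hi : Function.Injective i)
    (S : Fin k → Finset (Fin (n + 1)))
    (hS : ∀ j : Fin k, S j =
      Finset.image i (Finset.univ.filter fun t : Fin (k + l) => (j : ℕ) ≤ (t : ℕ)))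
    (β : Finset (Finset (Fin (n + 1)))) (hβ : β = Finset.image S Finset.univ)
    (βmin βmax : Finset (Fin (n + 1)))
    (hβmin : βmin =
      Finset.image i (Finset.univ.filter fun t : Fin (k + l) => k - 1 ≤ (t : ℕ)))
    (hβmax : βmax = Finset.image i Finset.univ)
    (Bβ : Finset (Finset (Fin (n + 1))))
    (hBβ : ∀ B : Finset (Fin (n + 1)), B ∈ Bβ ↔
      ((B.Nonempty ∧ (B ∈ β ∨ B ⊂ βmin ∨ βmax ⊂ B)) ∨ ∃ v : Fin (n + 1), B = {v}))
    (P : Set (Fin (n + 1) → ℝ)) (hP : P = ∑ A ∈ Bβ, simplexOf A)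
    (κ : (Fin (n + 1) → ℝ) → ℝ) (hκ : ∀ x, κ x = ∑ j : Fin k, ∑ t ∈ S j, x t)
    (m : ℝ) (hm : m = ∑ j : Fin k, ((Bβ.filter (· ⊆ S j)).card : ℝ))
    (F : Set (Fin (n + 1) → ℝ))
    (hF : F = {x ∈ P | ∀ j : Fin k, (∑ t ∈ S j, x t) = ((Bβ.filter (· ⊆ S j)).card : ℝ)}) :
    (∀ x ∈ P, m ≤ κ x) ∧
      (∀ x ∈ P, (κ x = m ↔
        ∀ j : Fin k, (∑ t ∈ S j, x t) = ((Bβ.filter (· ⊆ S j)).card : ℝ))) ∧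
      IsLeast (κ '' P) m ∧ {x ∈ P | κ x = m} = F := by
  classical
  -- The sets `S j` are nested (decreasing in `j`).
  have hmono : ∀ j j' : Fin k, j ≤ j' → S j' ⊆ S j := by
    intro j j' hjj' x hx
    rw [hS] at hx ⊢
    simp only [Finset.mem_image, Finset.mem_filter, Finset.mem_univ, true_and] at hx ⊢
    obtain ⟨t, ht, rfl⟩ := hx
    exact ⟨t, le_trans hjj' ht, rfl⟩
  -- Counting by an indicator sum.
  have hcard : ∀ j : Fin k,
      ((Bβ.filter (· ⊆ S j)).card : ℝ) = ∑ A ∈ Bβ, (if A ⊆ S j then (1 : ℝ) else 0) := by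
    intro j
    rw [Finset.sum_boole]
  -- The key per-`j` lower bound on `P`.
  have key : ∀ x ∈ P, ∀ j : Fin k,
      ((Bβ.filter (· ⊆ S j)).card : ℝ) ≤ ∑ t ∈ S j, x t := by
    intro x hx j
    rw [hP, Set.mem_finset_sum] at hx
    obtain ⟨g, hg, rfl⟩ := hx
    have hswap : ∑ t ∈ S j, (∑ A ∈ Bβ, g A) t = ∑ A ∈ Bβ, ∑ t ∈ S j, g A t := by
      simp only [Finset.sum_apply]
      exact Finset.sum_comm
    rw [hswap, hcard j]
    exact Finset.sum_le_sum fun A hA => simplexOf_sum_ge (hg hA)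
  have heqv : ∀ x ∈ P, (κ x = m ↔
      ∀ j : Fin k, (∑ t ∈ S j, x t) = ((Bβ.filter (· ⊆ S j)).card : ℝ)) := by
    intro x hx
    rw [hκ, hm]
    rw [show (∑ j : Fin k, ∑ t ∈ S j, x t) = (∑ j : Fin k, ((Bβ.filter (· ⊆ S j)).card : ℝ))
        ↔ (∑ j : Fin k, ((Bβ.filter (· ⊆ S j)).card : ℝ)) = ∑ j : Fin k, ∑ t ∈ S j, x t
      from eq_comm]
    rw [Finset.sum_eq_sum_iff_of_le fun j _ => key x hx j]
    constructor
    · intro h j; exact (h j (Finset.mem_univ j)).symm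
    · intro h j _; exact (h j).symm
  have hge : ∀ x ∈ P, m ≤ κ x := by
    intro x hx
    rw [hκ, hm]
    exact Finset.sum_le_sum fun j _ => key x hx j
  -- Construction of a minimizer: choose for each `A ∈ Bβ` a good vertex.
  have hchoice : ∀ A ∈ Bβ, ∃ v : Fin (n + 1), v ∈ A ∧ ∀ j : Fin k, (v ∈ S j ↔ A ⊆ S j) := by
    intro A hA
    have hAne : A.Nonempty := by
      rcases (hBβ A).1 hA with ⟨h1, -⟩ | ⟨w, rfl⟩
      · exact h1
      · exact ⟨w, Finset.mem_singleton_self w⟩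
    by_cases hall : ∀ j : Fin k, A ⊆ S j
    · obtain ⟨w, hw⟩ := hAne
      exact ⟨w, hw, fun j => ⟨fun _ => hall j, fun h => h hw⟩⟩
    · push_neg at hall
      have hsne : (Finset.univ.filter fun j : Fin k => ¬ A ⊆ S j).Nonempty := by
        obtain ⟨j, hj⟩ := hall
        exact ⟨j, by simp [hj]⟩
      set j0 := (Finset.univ.filter fun j : Fin k => ¬ A ⊆ S j).min' hsne with hj0
      have hj0s : j0 ∈ Finset.univ.filter fun j : Fin k => ¬ A ⊆ S j :=
        Finset.min'_mem _ _
      have hj0n : ¬ A ⊆ S j0 := by simpa using hj0s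
      obtain ⟨w, hwA, hwn⟩ := Finset.not_subset.mp hj0n
      refine ⟨w, hwA, fun j => ⟨fun hwS => ?_, fun h => h hwA⟩⟩
      by_contra hns
      have hjs : j ∈ Finset.univ.filter fun j : Fin k => ¬ A ⊆ S j := by simp [hns]
      exact hwn (hmono j0 j (Finset.min'_le _ _ hjs) hwS)
  choose! v hv1 hv2 using hchoice
  set x0 : Fin (n + 1) → ℝ := ∑ A ∈ Bβ, Pi.single (v A) (1 : ℝ) with hx0
  have hx0P : x0 ∈ P := by
    rw [hP]
    exact Set.finset_sum_mem_finset_sum _ _ _ fun A hA =>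
      subset_convexHull ℝ _ ⟨v A, hv1 A hA, rfl⟩
  have hx0F : ∀ j : Fin k, (∑ t ∈ S j, x0 t) = ((Bβ.filter (· ⊆ S j)).card : ℝ) := by
    intro j
    rw [hcard j, hx0]
    simp only [Finset.sum_apply]
    rw [Finset.sum_comm]
    refine Finset.sum_congr rfl fun A hA => ?_
    rw [show (∑ t ∈ S j, Pi.single (v A) (1 : ℝ) t) = if v A ∈ S j then (1 : ℝ) else 0 by
      simp [Pi.single_apply, Finset.sum_ite_eq' (S j) (v A)]]
    by_cases h : A ⊆ S j
    · rw [if_pos h, if_pos ((hv2 A hA j).mpr h)]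
    · rw [if_neg h, if_neg (fun hw => h ((hv2 A hA j).mp hw))]
  have hκx0 : κ x0 = m := (heqv x0 hx0P).mpr hx0F
  refine ⟨hge, heqv, ⟨⟨x0, hx0P, hκx0⟩, ?_⟩, ?_⟩
  · rintro b ⟨x, hx, rfl⟩
    exact hge x hx
  · ext x
    simp only [Set.mem_setOf_eq, hF]
    exact and_congr_right fun hx => heqv x hx
end

section
/- Let N ⊆ B_β \ {V} be a nested set with respect to the building set B_β \ {V}: for every subset A of N with at least two elements whose members are pairwise incomparable under inclusion, the union ⋃A is a proper subset of V and ⋃A ∉ B_β. If β ⊆ N and |N| = n, then the members of N are pairwise comparable under inclusion; consequently N can be written as a chain T_1 ⊊ T_2 ⊊ … ⊊ T_n of nonempty proper subsets of V with |T_j| = j for every j (i.e., N is a maximal 0-nested set). -/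
/-!
Two incomparable members of a nested set have their union outside `B_β`. This rules out a
singleton `{v} ∈ N` with `v ∉ β_min`: if `v = i_t ∈ β_max` then `{v} ∪ S_{t+2} = S_{t+1} ∈ β`, and
otherwise `{v} ∪ β_max ⊋ β_max`. Hence every member of `N` lies below `β_min`, in `β`, or strictly
above `β_max`. Unions within the lowest and within the highest layer stay in `B_β`, and across layers
everything is comparable because `β` is a chain from `β_min` to `β_max`. Finally, a chain of `n`
nonempty proper subsets of an `(n + 1)`-set has cardinalities exactly `1, …, n`.
-/

open Finset

namespace Finset

variable {α : Type*}

theorem injOn_card_of_isChain {N : Set (Finset α)} (hN : IsChain (· ⊆ ·) N) :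
    Set.InjOn card N := by
  intro X hX Y hY hXY
  rcases hN.total hX hY with h | h
  · exact eq_of_subset_of_card_le h hXY.ge
  · exact (eq_of_subset_of_card_le h hXY.le).symm

theorem ssubset_of_card_lt_of_isChain {N : Set (Finset α)} (hN : IsChain (· ⊆ ·) N)
    {X Y : Finset α} (hX : X ∈ N) (hY : Y ∈ N) (hXY : #X < #Y) : X ⊂ Y := by
  rcases hN.total hX hY with h | h
  · exact ssubset_of_subset_of_ne h (by rintro rfl; exact hXY.false)
  · exact absurd (card_le_card h) hXY.not_ge

theorem exists_strictMono_of_isChain [Fintype α] [DecidableEq α] {n : ℕ}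
    (hα : Fintype.card α = n + 1) {N : Finset (Finset α)}
    (hN : IsChain (· ⊆ ·) (N : Set (Finset α)))
    (hne : ∀ X ∈ N, X.Nonempty ∧ X ≠ univ) (hcard : #N = n) :
    ∃ T : Fin n → Finset α,
      StrictMono T ∧ (∀ j : Fin n, #(T j) = j + 1) ∧ N = image T univ := by
  have hinj := injOn_card_of_isChain hN
  have himage : N.image card = Icc 1 n := by
    refine eq_of_subset_of_card_le (fun c hc => ?_) ?_
    · obtain ⟨X, hX, rfl⟩ := mem_image.1 hc
      have hlt := card_lt_card (ssubset_univ_iff.2 (hne X hX).2)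
      rw [card_univ, hα] at hlt
      exact mem_Icc.2 ⟨(hne X hX).1.card_pos, Nat.lt_succ_iff.1 hlt⟩
    · rw [Nat.card_Icc, card_image_of_injOn hinj, hcard, Nat.add_sub_cancel]
  have hT : ∀ j : Fin n, ∃ X ∈ N, #X = j + 1 := fun j =>
    mem_image.1 (himage ▸ mem_Icc.2 ⟨j.val.succ_pos, j.isLt⟩)
  choose T hTN hTcard using hT
  have hTmono : StrictMono T := fun a b hab =>
    ssubset_of_card_lt_of_isChain hN (hTN a) (hTN b) (by rw [hTcard, hTcard]; omega)
  refine ⟨T, hTmono, hTcard, (eq_of_subset_of_card_le (fun X hX => ?_) ?_).symm⟩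
  · obtain ⟨j, -, rfl⟩ := mem_image.1 hX
    exact hTN j
  · rw [hcard, card_image_of_injective _ hTmono.injective, card_univ, Fintype.card_fin]

theorem comparable_of_union_mem [DecidableEq α] {N B : Finset (Finset α)}
    (hN : ∀ A ⊆ N, 2 ≤ #A → (∀ X ∈ A, ∀ Y ∈ A, X ≠ Y → ¬X ⊆ Y ∧ ¬Y ⊆ X) → A.sup id ∉ B)
    {X Y : Finset α} (hX : X ∈ N) (hY : Y ∈ N) (hXY : X ∪ Y ∈ B) : X ⊆ Y ∨ Y ⊆ X := by
  by_contra! hinc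
  have hne : X ≠ Y := by rintro rfl; exact hinc.1 subset_rfl
  refine hN {X, Y} (insert_subset hX (singleton_subset_iff.2 hY)) (card_pair hne).ge ?_ ?_
  · simp only [mem_insert, mem_singleton]
    rintro _ (rfl | rfl) _ (rfl | rfl) h
    exacts [absurd rfl h, hinc, hinc.symm, absurd rfl h]
  · simpa using hXY

theorem isChain_of_forall_union_mem [DecidableEq α] {β N B : Set (Finset α)} {C D : Finset α}
    (hβ : IsChain (· ⊆ ·) β) (hCβ : C ∈ β) (hβCD : ∀ X ∈ β, C ⊆ X ∧ X ⊆ D)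
    (hB : ∀ X : Finset α, X.Nonempty → X ∈ β ∨ X ⊂ C ∨ D ⊂ X → X ∈ B)
    (hN : ∀ X ∈ N, X.Nonempty ∧ (X ⊆ C ∨ X ∈ β ∨ D ⊂ X))
    (hunion : ∀ X ∈ N, ∀ Y ∈ N, X ∪ Y ∈ B → X ⊆ Y ∨ Y ⊆ X) :
    IsChain (· ⊆ ·) N := by
  have hCD : C ⊆ D := (hβCD C hCβ).2
  intro X hX Y hY hXY
  have hne : (X ∪ Y).Nonempty := (hN X hX).1.mono subset_union_left
  rcases (hN X hX).2 with hXC | hXβ | hDX <;> rcases (hN Y hY).2 with hYC | hYβ | hDY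
  · refine hunion X hX Y hY (hB _ hne ?_)
    rcases (union_subset hXC hYC).ssubset_or_eq with h | h
    · exact Or.inr (Or.inl h)
    · exact Or.inl (h ▸ hCβ)
  · exact Or.inl (hXC.trans (hβCD Y hYβ).1)
  · exact Or.inl (hXC.trans (hCD.trans hDY.subset))
  · exact Or.inr (hYC.trans (hβCD X hXβ).1)
  · exact hβ hXβ hYβ hXY
  · exact Or.inl ((hβCD X hXβ).2.trans hDY.subset)
  · exact Or.inr (hYC.trans (hCD.trans hDX.subset))
  · exact Or.inr ((hβCD Y hYβ).2.trans hDX.subset)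
  · exact hunion X hX Y hY (hB _ hne (Or.inr (Or.inr (hDX.trans_subset subset_union_left))))

end Finset

section Suffix

variable {α : Type*} [DecidableEq α] {m : ℕ} (i : Fin m → α)

/-- `suffix i j = {i_{j+1}, …, i_m}` is the set `S_{j+1}` of the paper. -/
def suffix (j : ℕ) : Finset α :=
  image i (univ.filter fun t : Fin m => j ≤ (t : ℕ))

theorem mem_suffix {j : ℕ} {x : α} : x ∈ suffix i j ↔ ∃ t : Fin m, j ≤ t ∧ i t = x := by
  simp [suffix]

theorem suffix_antitone : Antitone (suffix i) := fun a b hab x => by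
  simp only [mem_suffix]
  exact fun ⟨t, ht, hx⟩ => ⟨t, hab.trans ht, hx⟩

theorem suffix_zero : suffix i 0 = image i univ := by
  simp [suffix]

theorem suffix_nonempty {j : ℕ} (hj : j < m) : (suffix i j).Nonempty :=
  ⟨i ⟨j, hj⟩, (mem_suffix i).2 ⟨_, le_rfl, rfl⟩⟩

theorem insert_suffix_succ (t : Fin m) : insert (i t) (suffix i (t + 1)) = suffix i t := by
  ext x
  simp only [mem_insert, mem_suffix]
  constructor
  · rintro (rfl | ⟨s, hs, rfl⟩)
    exacts [⟨t, le_rfl, rfl⟩, ⟨s, by omega, rfl⟩]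
  · rintro ⟨s, hs, rfl⟩
    rcases hs.eq_or_lt with h | h
    · exact Or.inl (congrArg i (Fin.ext h).symm)
    · exact Or.inr ⟨s, h, rfl⟩

variable {i}

theorem apply_mem_suffix_iff (hi : Function.Injective i) {t : Fin m} {j : ℕ} :
    i t ∈ suffix i j ↔ j ≤ t := by
  simp [mem_suffix, hi.eq_iff]

theorem mem_suffix_of_singleton_mem (hi : Function.Injective i) {k : ℕ} (hk : 0 < k)
    (hkm : k ≤ m) {N B : Set (Finset α)} (hNB : N ⊆ B) (hβN : ∀ j < k, suffix i j ∈ N)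
    (hB : ∀ X, suffix i 0 ⊂ X → X ∈ B)
    (hunion : ∀ X ∈ N, ∀ Y ∈ N, X ∪ Y ∈ B → X ⊆ Y ∨ Y ⊆ X)
    {v : α} (hv : {v} ∈ N) : v ∈ suffix i (k - 1) := by
  have incomparable : ∀ Y : Finset α, Y.Nonempty → v ∉ Y → ¬({v} ⊆ Y ∨ Y ⊆ {v}) := by
    rintro Y ⟨y, hy⟩ hvY (h | h)
    · exact hvY (singleton_subset_iff.1 h)
    · exact hvY (mem_singleton.1 (h hy) ▸ hy)
  by_contra hvmin
  by_cases hvmax : v ∈ suffix i 0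
  · obtain ⟨t, -, rfl⟩ := (mem_suffix i).1 hvmax
    have htk : (t : ℕ) + 1 < k := by
      by_contra h
      exact hvmin ((apply_mem_suffix_iff hi).2 (by omega))
    refine incomparable _ (suffix_nonempty i (by omega)) (by simp [apply_mem_suffix_iff hi])
      (hunion _ hv _ (hβN _ htk) ?_)
    rw [singleton_union, insert_suffix_succ]
    exact hNB (hβN _ (by omega))
  · refine incomparable _ (suffix_nonempty i (by omega)) hvmax (hunion _ hv _ (hβN 0 hk) ?_)
    refine hB _ (Finset.ssubset_iff_subset_ne.2 ⟨subset_union_right, fun h => hvmax ?_⟩)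
    exact h ▸ mem_union_left _ (mem_singleton_self v)

theorem isChain_of_suffix_mem (hi : Function.Injective i) {k : ℕ} (hk : 0 < k) (hkm : k ≤ m)
    {N B : Set (Finset α)}
    (hB : ∀ X, X ∈ B ↔ (X.Nonempty ∧
      ((∃ j < k, suffix i j = X) ∨ X ⊂ suffix i (k - 1) ∨ suffix i 0 ⊂ X)) ∨ ∃ v, X = {v})
    (hNB : N ⊆ B) (hβN : ∀ j < k, suffix i j ∈ N)
    (hunion : ∀ X ∈ N, ∀ Y ∈ N, X ∪ Y ∈ B → X ⊆ Y ∨ Y ⊆ X) :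
    IsChain (· ⊆ ·) N := by
  have hsingleton : ∀ v, {v} ∈ N → v ∈ suffix i (k - 1) := fun v =>
    mem_suffix_of_singleton_mem hi hk hkm hNB hβN
      (fun X hX => (hB X).2 (Or.inl ⟨(suffix_nonempty i (by omega)).mono hX.subset,
        Or.inr (Or.inr hX)⟩)) hunion
  refine isChain_of_forall_union_mem (β := {X | ∃ j < k, suffix i j = X})
    ((suffix_antitone i).isChain_range.mono ?_) ⟨k - 1, by omega, rfl⟩ ?_
    (fun X hX h => (hB X).2 (Or.inl ⟨hX, h⟩)) (fun X hX => ?_) hunion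
  · rintro X ⟨j, -, rfl⟩
    exact Set.mem_range_self j
  · rintro X ⟨j, hj, rfl⟩
    exact ⟨suffix_antitone i (by omega), suffix_antitone i j.zero_le⟩
  · rcases (hB X).1 (hNB hX) with ⟨hne, hXβ | hXC | hDX⟩ | ⟨v, rfl⟩
    exacts [⟨hne, Or.inr (Or.inl hXβ)⟩, ⟨hne, Or.inl hXC.subset⟩, ⟨hne, Or.inr (Or.inr hDX)⟩,
      ⟨singleton_nonempty v, Or.inl (singleton_subset_iff.2 (hsingleton v hX))⟩]

end Suffix

theorem stmt_4_general (n k l : ℕ) (hk : 2 ≤ k)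
    (i : Fin (k + l) → Fin (n + 1)) (hi : Function.Injective i)
    (S : Fin k → Finset (Fin (n + 1)))
    (hS : ∀ j : Fin k, S j =
      Finset.image i (Finset.univ.filter fun t : Fin (k + l) => (j : ℕ) ≤ (t : ℕ)))
    (β : Finset (Finset (Fin (n + 1)))) (hβ : β = Finset.image S Finset.univ)
    (βmin βmax : Finset (Fin (n + 1)))
    (hβmin : βmin =
      Finset.image i (Finset.univ.filter fun t : Fin (k + l) => k - 1 ≤ (t : ℕ)))
    (hβmax : βmax = Finset.image i Finset.univ)
    (Bβ : Finset (Finset (Fin (n + 1))))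
    (hBβ : ∀ B : Finset (Fin (n + 1)), B ∈ Bβ ↔
      ((B.Nonempty ∧ (B ∈ β ∨ B ⊂ βmin ∨ βmax ⊂ B)) ∨ ∃ v : Fin (n + 1), B = {v}))
    (N : Finset (Finset (Fin (n + 1))))
    (hNsub : N ⊆ Bβ.erase Finset.univ)
    (hNnested : ∀ A ⊆ N, 2 ≤ A.card →
      (∀ X ∈ A, ∀ Y ∈ A, X ≠ Y → ¬X ⊆ Y ∧ ¬Y ⊆ X) →
      (A.sup id ⊂ Finset.univ ∧ A.sup id ∉ Bβ))
    (hβN : β ⊆ N) (hNcard : N.card = n) :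
    (∀ X ∈ N, ∀ Y ∈ N, X ⊆ Y ∨ Y ⊆ X) ∧
      ∃ T : Fin n → Finset (Fin (n + 1)),
        StrictMono T ∧ (∀ j : Fin n, (T j).card = (j : ℕ) + 1) ∧
        (∀ j : Fin n, (T j).Nonempty ∧ T j ≠ Finset.univ) ∧
        N = Finset.image T Finset.univ := by
  have hSj : ∀ j : Fin k, S j = suffix i j := hS
  have hβmem : ∀ X, X ∈ β ↔ ∃ j < k, suffix i j = X := by simp [hβ, hSj, Fin.exists_iff]
  replace hβmin : βmin = suffix i (k - 1) := hβmin
  replace hβmax : βmax = suffix i 0 := by rw [hβmax, suffix_zero]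
  subst hβmin hβmax
  have hNB : ∀ X ∈ N, X ∈ Bβ ∧ X ≠ univ := fun X hX => (mem_erase.1 (hNsub hX)).symm
  have hne : ∀ X ∈ N, X.Nonempty ∧ X ≠ univ := fun X hX => by
    refine ⟨?_, (hNB X hX).2⟩
    rcases (hBβ X).1 (hNB X hX).1 with ⟨hne, -⟩ | ⟨v, rfl⟩
    exacts [hne, singleton_nonempty v]
  have hchain : IsChain (· ⊆ ·) (N : Set (Finset (Fin (n + 1)))) :=
    isChain_of_suffix_mem (B := Bβ) hi (by omega) (by omega) (by simpa [← hβmem] using hBβ)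
      (fun X hX => (hNB X hX).1) (fun j hj => hβN ((hβmem _).2 ⟨j, hj, rfl⟩))
      (fun X hX Y hY =>
        comparable_of_union_mem (fun A hA h2 hinc => (hNnested A hA h2 hinc).2) hX hY)
  refine ⟨fun X hX Y hY => hchain.total hX hY, ?_⟩
  obtain ⟨T, hT, hTcard, rfl⟩ :=
    exists_strictMono_of_isChain (Fintype.card_fin _) hchain hne hNcard
  exact ⟨T, hT, hTcard, fun j => hne _ (mem_image_of_mem T (mem_univ j)), rfl⟩

/-- a nested set `N ⊆ B_β \ {V}` with respect to the building set
`B_β \ {V}` which contains `β` and has `n` elements is a chain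
`T_1 ⊊ T_2 ⊊ … ⊊ T_n` of nonempty proper subsets of `V` with `|T_j| = j`
(i.e., a maximal 0-nested set). -/
theorem stmt_4 (n k l : ℕ) (hn : 2 ≤ n) (hk : 2 ≤ k) (hkl : k + l ≤ n)
    (i : Fin (k + l) → Fin (n + 1)) (hi : Function.Injective i)
    (S : Fin k → Finset (Fin (n + 1)))
    (hS : ∀ j : Fin k, S j =
      Finset.image i (Finset.univ.filter fun t : Fin (k + l) => (j : ℕ) ≤ (t : ℕ)))
    (β : Finset (Finset (Fin (n + 1)))) (hβ : β = Finset.image S Finset.univ)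
    (βmin βmax : Finset (Fin (n + 1)))
    (hβmin : βmin =
      Finset.image i (Finset.univ.filter fun t : Fin (k + l) => k - 1 ≤ (t : ℕ)))
    (hβmax : βmax = Finset.image i Finset.univ)
    (Bβ : Finset (Finset (Fin (n + 1))))
    (hBβ : ∀ B : Finset (Fin (n + 1)), B ∈ Bβ ↔
      ((B.Nonempty ∧ (B ∈ β ∨ B ⊂ βmin ∨ βmax ⊂ B)) ∨ ∃ v : Fin (n + 1), B = {v}))
    (N : Finset (Finset (Fin (n + 1))))
    (hNsub : N ⊆ Bβ.erase Finset.univ)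
    (hNnested : ∀ A ⊆ N, 2 ≤ A.card →
      (∀ X ∈ A, ∀ Y ∈ A, X ≠ Y → ¬X ⊆ Y ∧ ¬Y ⊆ X) →
      (A.sup id ⊂ Finset.univ ∧ A.sup id ∉ Bβ))
    (hβN : β ⊆ N) (hNcard : N.card = n) :
    (∀ X ∈ N, ∀ Y ∈ N, X ⊆ Y ∨ Y ⊆ X) ∧
      ∃ T : Fin n → Finset (Fin (n + 1)),
        StrictMono T ∧ (∀ j : Fin n, (T j).card = (j : ℕ) + 1) ∧
        (∀ j : Fin n, (T j).Nonempty ∧ T j ≠ Finset.univ) ∧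
        N = Finset.image T Finset.univ :=
  stmt_4_general n k l hk i hi S hS β hβ βmin βmax hβmin hβmax Bβ hBβ N hNsub hNnested hβN hNcard
end

section
/- Let a_1, …, a_n be linearly independent vectors in ℝ^n, and for I ⊆ {1,…,n} with |I| ≥ 2 put h_I = ∑_{i∈I} a_i. Let 2 ≤ m ≤ n−1 and let I_1 ⊋ I_2 ⊋ … ⊋ I_m be subsets of {1,…,n}, each with at least two elements. Let A_1 be a set obtained from {a_1,…,a_n} by removing m of the vectors a_i and adding the m vectors h_{I_1}, …, h_{I_m}, and suppose that A_1 consists of n linearly independent vectors (so A_1 spans an n-cone N_1). Then for every k with 1 ≤ k < m there is exactly one index i ∈ I_k \ I_{k+1} such that the set A_2 obtained from A_1 by replacing h_{I_k} with a_i is linearly independent and the cone generated by A_1 is contained in the cone generated by A_2. -/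
/-- The convex cone generated by a set `S`: all finite nonnegative combinations
of elements of `S`. -/
def coneOf {E : Type*} [AddCommGroup E] [Module ℝ E] (S : Set E) : Set E :=
  {x | ∃ (m : ℕ) (c : Fin m → ℝ) (v : Fin m → E),
    (∀ t, 0 ≤ c t) ∧ (∀ t, v t ∈ S) ∧ x = ∑ t, c t • v t}

/-!
Write `h j = ∑ t ∈ I j, a t` and call `I j ∩ R` the trace of `I j`, where `R` indexes the removed
vectors. If `I p \ I q` missed `R`, then `h p - h q` would be a combination of vectors kept in
`A₁`, contradicting the independence of `A₁`; likewise no trace is empty. So the traces form a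
strictly decreasing chain of `m` nonempty subsets of the `m`-set `R`, whence `|I k ∩ R| = m - k`
and `I k \ I (k+1)` contains exactly one removed index `i`. Then
`h k = h (k+1) + a i + (kept vectors)` shows that swapping `h k` for `a i` preserves independence
and enlarges the cone, while for a kept index `i'` the swap merely deletes `h k`, which does not
lie in the cone of the remaining vectors.
-/

section Cone

variable {E : Type*} [AddCommGroup E] [Module ℝ E]

theorem coneOf_eq_hull (S : Set E) : coneOf S = PointedCone.hull ℝ S := by
  ext x
  rw [SetLike.mem_coe, Submodule.mem_span_set']
  constructor
  · rintro ⟨m, c, v, hc, hv, rfl⟩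
    exact ⟨m, fun t => ⟨c t, hc t⟩, fun t => ⟨v t, hv t⟩, rfl⟩
  · rintro ⟨m, c, v, rfl⟩
    exact ⟨m, fun t => c t, fun t => v t, fun t => (c t).2, fun t => (v t).2, rfl⟩

theorem coneOf_subset_coneOf_iff {S T : Set E} : coneOf S ⊆ coneOf T ↔ S ⊆ coneOf T := by
  simp only [coneOf_eq_hull, SetLike.coe_subset_coe, Submodule.span_le]

theorem coneOf_subset_span (S : Set E) : coneOf S ⊆ Submodule.span ℝ S := by
  rw [coneOf_eq_hull]
  exact PointedCone.hull_le_span ℝ S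

end Cone

theorem LinearIndependent.finsetSum_injective {ι R M : Type*} [Ring R] [Nontrivial R]
    [AddCommGroup M] [Module R M] {v : ι → M} (hv : LinearIndependent R v) :
    Function.Injective fun s : Finset ι => ∑ i ∈ s, v i := by
  classical
  intro s t hst
  have key := linearIndependent_iff'.mp hv (s ∪ t)
    (fun i => (if i ∈ s then 1 else 0) - (if i ∈ t then 1 else 0)) (by
      simp only [sub_smul, Finset.sum_sub_distrib, ite_smul, one_smul, zero_smul,
        Finset.sum_ite_mem, Finset.union_inter_cancel_left, Finset.union_inter_cancel_right]
      exact sub_eq_zero.mpr hst)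
  ext i
  by_cases hi : i ∈ s ∪ t
  · have := key i hi
    split_ifs at this <;> simp_all
  · simp_all

theorem LinearIndepOn.id_notMem_span_sdiff_singleton {K V : Type*} [DivisionRing K]
    [AddCommGroup V] [Module K V] {s : Set V} {x : V} (hs : LinearIndepOn K id s) (hx : x ∈ s) :
    x ∉ Submodule.span K (s \ {x}) := by
  rw [(hs.mono Set.sdiff_subset).notMem_span_iff_id, Set.insert_sdiff_singleton,
    Set.insert_eq_of_mem hx]
  simpa using hs

theorem Finset.card_eq_sub_of_strictAnti {α : Type*} {m : ℕ} {S : Fin m → Finset α}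
    {R : Finset α} (hS : StrictAnti S) (hne : ∀ j, (S j).Nonempty) (hR : ∀ j, S j ⊆ R)
    (hcard : R.card = m) (j : Fin m) : (S j).card = m - j := by
  -- `j ↦ m - |S j|` is a strictly monotone self-map of `Fin m`, hence the identity.
  have hle : ∀ j, (S j).card ≤ m := fun j => hcard ▸ Finset.card_le_card (hR j)
  let f : Fin m → Fin m := fun j =>
    ⟨m - (S j).card, by have := (hne j).card_pos; have := hle j; omega⟩
  have hf : StrictMono f := fun i j hij => by
    have := Finset.card_strictMono (hS hij)
    simp only [f, Fin.mk_lt_mk]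
    have := hle i
    omega
  have := congrArg Fin.val (hf.apply_eq (x := j))
  simp only [f] at this
  have := hle j
  omega

section Replacement

variable {ι E : Type*} [AddCommGroup E] [Module ℝ E] {a : ι → E} {R : Finset ι} {A : Set E}
  {x : E} {m : ℕ} {I : Fin m → Finset ι}

theorem sum_mem_coneOf_sdiff_singleton (hB : a '' (↑R)ᶜ ⊆ A) (hx : x ∉ a '' (↑R)ᶜ)
    {J : Finset ι} (hJ : ∀ t ∈ J, t ∉ R) : ∑ t ∈ J, a t ∈ coneOf (A \ {x}) := by
  rw [coneOf_eq_hull]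
  refine Submodule.sum_mem _ fun t ht => Submodule.subset_span ⟨hB ⟨t, hJ t ht, rfl⟩, ?_⟩
  rintro rfl
  exact hx ⟨t, hJ t ht, rfl⟩

theorem inter_nonempty_of_sub_sum_mem_span [DecidableEq ι] (hA : LinearIndepOn ℝ id A)
    (hB : a '' (↑R)ᶜ ⊆ A) (hxA : x ∈ A) (hx : x ∉ a '' (↑R)ᶜ) {J : Finset ι}
    (hJ : x - ∑ t ∈ J, a t ∈ Submodule.span ℝ (A \ {x})) : (J ∩ R).Nonempty := by
  by_contra hJR
  have hsum := coneOf_subset_span _ <| sum_mem_coneOf_sdiff_singleton hB hx (J := J)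
    fun t ht htR => hJR ⟨t, Finset.mem_inter.mpr ⟨ht, htR⟩⟩
  exact hA.id_notMem_span_sdiff_singleton hxA (by simpa using add_mem hJ hsum)

theorem linearIndepOn_insert_sdiff_singleton (hA : LinearIndepOn ℝ id A) (hx : x ∈ A) {v : E}
    (hxv : x - v ∈ Submodule.span ℝ (A \ {x})) : LinearIndepOn ℝ id (insert v (A \ {x})) := by
  refine linearIndepOn_id_insert_iff.mpr ⟨hA.mono Set.sdiff_subset, fun hv => ?_⟩
  exact absurd (by simpa using add_mem hxv hv) (hA.id_notMem_span_sdiff_singleton hx)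

theorem coneOf_subset_insert_sdiff_singleton {v : E} (hxv : x - v ∈ coneOf (A \ {x})) :
    coneOf A ⊆ coneOf (insert v (A \ {x})) := by
  rw [coneOf_subset_coneOf_iff, coneOf_eq_hull]
  intro y hy
  by_cases hyx : y = x
  · subst hyx
    rw [coneOf_eq_hull] at hxv
    simpa using add_mem (Submodule.subset_span (Set.mem_insert v _))
      (Submodule.span_mono (Set.subset_insert v _) hxv)
  · exact Submodule.subset_span (Set.mem_insert_of_mem v ⟨hy, hyx⟩)

theorem not_coneOf_subset_insert_sdiff_singleton (hA : LinearIndepOn ℝ id A) (hx : x ∈ A) {v : E}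
    (hv : v ∈ A \ {x}) : ¬ coneOf A ⊆ coneOf (insert v (A \ {x})) := by
  rw [Set.insert_eq_of_mem hv]
  intro hsub
  have := coneOf_subset_span _ (hsub (coneOf_subset_coneOf_iff.mp subset_rfl hx))
  exact hA.id_notMem_span_sdiff_singleton hx this

theorem sum_notMem_image_of_two_le_card (ha : LinearIndependent ℝ a) {J : Finset ι}
    (hJ : 2 ≤ J.card) (s : Set ι) : ∑ t ∈ J, a t ∉ a '' s := by
  rintro ⟨t, -, ht⟩
  have : J = {t} := ha.finsetSum_injective (by simpa using ht.symm)
  simp [this] at hJ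

theorem strictAnti_inter_of_linearIndepOn [DecidableEq ι] (ha : LinearIndependent ℝ a)
    (hI2 : ∀ j, 2 ≤ (I j).card) (hI : StrictAnti I) (hA : LinearIndepOn ℝ id A)
    (hB : a '' (↑R)ᶜ ⊆ A) (hIA : ∀ j, ∑ t ∈ I j, a t ∈ A) : StrictAnti fun j => I j ∩ R := by
  intro p q hpq
  have hsub : I q ⊆ I p := (hI hpq).le
  have hne : ∑ t ∈ I q, a t ≠ ∑ t ∈ I p, a t := fun h => (hI hpq).ne (ha.finsetSum_injective h)
  have hdiff : ∑ t ∈ I p, a t - ∑ t ∈ I p \ I q, a t = ∑ t ∈ I q, a t := by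
    rw [← Finset.sum_sdiff hsub, add_sub_cancel_left]
  obtain ⟨r, hr⟩ := inter_nonempty_of_sub_sum_mem_span hA hB (hIA p)
    (sum_notMem_image_of_two_le_card ha (hI2 p) _) (J := I p \ I q)
    (by rw [hdiff]; exact Submodule.subset_span ⟨hIA q, hne⟩)
  simp only [Finset.mem_inter, Finset.mem_sdiff] at hr
  exact (Finset.ssubset_iff_of_subset (Finset.inter_subset_inter_right hsub)).mpr
    ⟨r, Finset.mem_inter.mpr ⟨hr.1.1, hr.2⟩, fun h => hr.1.2 (Finset.mem_inter.mp h).1⟩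

theorem inter_nonempty_of_linearIndepOn [DecidableEq ι] (ha : LinearIndependent ℝ a)
    (hI2 : ∀ j, 2 ≤ (I j).card) (hA : LinearIndepOn ℝ id A)
    (hB : a '' (↑R)ᶜ ⊆ A) (hIA : ∀ j, ∑ t ∈ I j, a t ∈ A) (j : Fin m) : (I j ∩ R).Nonempty :=
  inter_nonempty_of_sub_sum_mem_span hA hB (hIA j) (sum_notMem_image_of_two_le_card ha (hI2 j) _)
    (by simp)

theorem existsUnique_mem_sdiff_inter [DecidableEq ι] (ha : LinearIndependent ℝ a)
    (hI2 : ∀ j, 2 ≤ (I j).card) (hI : StrictAnti I) (hA : LinearIndepOn ℝ id A)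
    (hB : a '' (↑R)ᶜ ⊆ A) (hIA : ∀ j, ∑ t ∈ I j, a t ∈ A) (hR : R.card = m)
    (k : Fin m) (hk : (k : ℕ) + 1 < m) : ∃! i, i ∈ I k \ I ⟨k + 1, hk⟩ ∧ i ∈ R := by
  have hS := strictAnti_inter_of_linearIndepOn ha hI2 hI hA hB hIA
  have hcard := Finset.card_eq_sub_of_strictAnti hS
    (inter_nonempty_of_linearIndepOn ha hI2 hA hB hIA) (fun _ => Finset.inter_subset_right) hR
  have hlt : k < ⟨k + 1, hk⟩ := Fin.mk_lt_mk.mpr (Nat.lt_add_one _)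
  have hone : ((I k ∩ R) \ (I ⟨k + 1, hk⟩ ∩ R)).card = 1 := by
    rw [Finset.card_sdiff_of_subset (hS hlt).le, hcard k, hcard ⟨k + 1, hk⟩]
    simp only
    omega
  refine (existsUnique_congr fun i => ?_).mp (Finset.card_eq_one_iff_existsUnique.mp hone)
  simp only [Finset.mem_sdiff, Finset.mem_inter]
  tauto

theorem sum_sub_mem_coneOf_sdiff_singleton [DecidableEq ι] (hB : a '' (↑R)ᶜ ⊆ A)
    {J J' : Finset ι} (hJ : ∑ t ∈ J, a t ∉ a '' (↑R)ᶜ)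
    (hJ' : ∑ t ∈ J', a t ∈ A \ {∑ t ∈ J, a t}) (hJJ' : J' ⊆ J)
    {i : ι} (hi : i ∈ J \ J') (huniq : ∀ t ∈ J \ J', t ∈ R → t = i) :
    ∑ t ∈ J, a t - a i ∈ coneOf (A \ {∑ t ∈ J, a t}) := by
  have hrest : ∀ t ∈ (J \ J').erase i, t ∉ R := fun t ht htR =>
    (Finset.mem_erase.mp ht).1 (huniq t (Finset.mem_erase.mp ht).2 htR)
  have hsplit : ∑ t ∈ J, a t - a i = ∑ t ∈ (J \ J').erase i, a t + ∑ t ∈ J', a t := by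
    rw [← Finset.sum_sdiff hJJ', ← Finset.add_sum_erase _ _ hi]
    abel
  rw [hsplit, coneOf_eq_hull]
  refine add_mem ?_ (Submodule.subset_span hJ')
  simpa [coneOf_eq_hull] using sum_mem_coneOf_sdiff_singleton hB hJ hrest

end Replacement

theorem stmt_6_general (n m : ℕ)
    (a : Fin n → (Fin n → ℝ)) (ha : LinearIndependent ℝ a)
    (I : Fin m → Finset (Fin n)) (hI2 : ∀ j, 2 ≤ (I j).card)
    (hchain : ∀ j j' : Fin m, j < j' → I j' ⊂ I j)
    (R : Finset (Fin n)) (hR : R.card = m)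
    (A₁ : Set (Fin n → ℝ))
    (hA₁ : A₁ = (a '' ((Finset.univ \ R : Finset (Fin n)) : Set (Fin n))) ∪
      Set.range (fun j : Fin m => ∑ t ∈ I j, a t))
    (hA₁ind : LinearIndependent ℝ (Subtype.val : A₁ → (Fin n → ℝ))) :
    ∀ j : Fin m, ∀ hj : (j : ℕ) + 1 < m,
      ∃! i : Fin n, i ∈ I j \ I ⟨(j : ℕ) + 1, hj⟩ ∧
        (LinearIndependent ℝ
            (Subtype.val : (insert (a i) (A₁ \ {∑ t ∈ I j, a t}) : Set (Fin n → ℝ)) →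
              (Fin n → ℝ)) ∧
          coneOf A₁ ⊆ coneOf (insert (a i) (A₁ \ {∑ t ∈ I j, a t}))) := by
  intro k hk
  have hA : LinearIndepOn ℝ id A₁ := hA₁ind
  have hB : a '' (↑R)ᶜ ⊆ A₁ := by
    rw [hA₁, Finset.coe_sdiff, Finset.coe_univ, ← Set.compl_eq_univ_sdiff]
    exact Set.subset_union_left
  have hIA : ∀ j, ∑ t ∈ I j, a t ∈ A₁ := fun j => hA₁ ▸ Or.inr ⟨j, rfl⟩
  have hI : StrictAnti I := hchain
  have hkB := sum_notMem_image_of_two_le_card ha (hI2 k) (↑R)ᶜ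
  have hlt : k < ⟨k + 1, hk⟩ := Fin.mk_lt_mk.mpr (Nat.lt_add_one _)
  obtain ⟨i, ⟨hi, -⟩, huniq⟩ := existsUnique_mem_sdiff_inter ha hI2 hI hA hB hIA hR k hk
  have hrest := sum_sub_mem_coneOf_sdiff_singleton hB hkB
    ⟨hIA _, fun h => (hI hlt).ne (ha.finsetSum_injective h)⟩ (hI hlt).le hi
    fun t ht htR => huniq t ⟨ht, htR⟩
  refine ⟨i, ⟨hi, linearIndepOn_insert_sdiff_singleton hA (hIA k) (coneOf_subset_span _ hrest),
    coneOf_subset_insert_sdiff_singleton hrest⟩, ?_⟩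
  rintro i' ⟨hi', -, hcone⟩
  by_contra hne
  have hi'R : i' ∉ R := fun h => hne (huniq i' ⟨hi', h⟩)
  exact not_coneOf_subset_insert_sdiff_singleton hA (hIA k)
    ⟨hB ⟨i', hi'R, rfl⟩, fun h => hkB ⟨i', hi'R, h⟩⟩ hcone

/-- for a chain `I_1 ⊋ … ⊋ I_m` and a linearly independent set `A_1`
obtained from `{a_1,…,a_n}` by replacing `m` of the vectors with `h_{I_1},…,h_{I_m}`,
for every `k < m` there is exactly one `i ∈ I_k \ I_{k+1}` such that replacing
`h_{I_k}` by `a_i` yields a linearly independent set whose cone contains that of `A_1`. -/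
theorem stmt_6 (n m : ℕ) (hm2 : 2 ≤ m) (hmn : m ≤ n - 1)
    (a : Fin n → (Fin n → ℝ)) (ha : LinearIndependent ℝ a)
    (I : Fin m → Finset (Fin n)) (hI2 : ∀ j, 2 ≤ (I j).card)
    (hchain : ∀ j j' : Fin m, j < j' → I j' ⊂ I j)
    (R : Finset (Fin n)) (hR : R.card = m)
    (A₁ : Set (Fin n → ℝ))
    (hA₁ : A₁ = (a '' ((Finset.univ \ R : Finset (Fin n)) : Set (Fin n))) ∪
      Set.range (fun j : Fin m => ∑ t ∈ I j, a t))
    (hA₁card : A₁.ncard = n)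
    (hA₁ind : LinearIndependent ℝ (Subtype.val : A₁ → (Fin n → ℝ))) :
    ∀ j : Fin m, ∀ hj : (j : ℕ) + 1 < m,
      ∃! i : Fin n, i ∈ I j \ I ⟨(j : ℕ) + 1, hj⟩ ∧
        (LinearIndependent ℝ
            (Subtype.val : (insert (a i) (A₁ \ {∑ t ∈ I j, a t}) : Set (Fin n → ℝ)) →
              (Fin n → ℝ)) ∧
          coneOf A₁ ⊆ coneOf (insert (a i) (A₁ \ {∑ t ∈ I j, a t}))) :=
  stmt_6_general n m a ha I hI2 hchain R hR A₁ hA₁ hA₁ind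
end

section
/- For every nonempty finite set V of points in a real vector space, conv({0} ∪ V) + conv(V) = conv(V ∪ 2V), where + denotes the Minkowski sum, conv the convex hull and 2V = {2v : v ∈ V}. -/
open Pointwise

/-- for a nonempty finite set `V` of points of a real vector space,
`conv({0} ∪ V) + conv(V) = conv(V ∪ 2V)`. -/
theorem stmt_7 {E : Type*} [AddCommGroup E] [Module ℝ E]
    (V : Set E) (hfin : V.Finite) (hne : V.Nonempty) :
    convexHull ℝ ({0} ∪ V) + convexHull ℝ V =
      convexHull ℝ (V ∪ (2 : ℝ) • V) := by
  rw [← convexHull_add]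
  have hset : ({0} ∪ V) + V = V ∪ (V + V) := by
    rw [Set.union_add, Set.singleton_add, Set.image_add_left]
    simp
  rw [hset]
  apply Set.Subset.antisymm
  · apply convexHull_min _ (convex_convexHull ℝ _)
    rintro x (hx | ⟨a, ha, b, hb, rfl⟩)
    · exact subset_convexHull ℝ _ (Or.inl hx)
    · have h2a : (2 : ℝ) • a ∈ convexHull ℝ (V ∪ (2 : ℝ) • V) :=
        subset_convexHull ℝ _ (Or.inr ⟨a, ha, rfl⟩)
      have h2b : (2 : ℝ) • b ∈ convexHull ℝ (V ∪ (2 : ℝ) • V) :=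
        subset_convexHull ℝ _ (Or.inr ⟨b, hb, rfl⟩)
      have := (convex_convexHull ℝ (V ∪ (2 : ℝ) • V)) h2a h2b
        (by norm_num : (0:ℝ) ≤ 1/2) (by norm_num : (0:ℝ) ≤ 1/2) (by norm_num)
      simpa [smul_smul] using this
  · apply convexHull_min _ (convex_convexHull ℝ _)
    rintro x (hx | ⟨a, ha, rfl⟩)
    · exact subset_convexHull ℝ _ (Or.inl hx)
    · refine subset_convexHull ℝ _ (Or.inr ⟨a, ha, a, ha, ?_⟩)
      show a + a = (2:ℝ) • a; rw [two_smul]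
end

section
/- Let P ⊆ ℝ^d be a polytope, F a nonempty exposed face of P with F ≠ P, and a ∈ ℝ^d, b ∈ ℝ such that every extreme point v of P satisfies ⟨a,v⟩ < b if v ∈ F and ⟨a,v⟩ > b if v ∉ F; put Q = P ∩ {x : ⟨a,x⟩ ≥ b} (the truncation of P in the face F). Then the union of the normal cones N(Q,v) over all extreme points v of Q lying on the hyperplane {x : ⟨a,x⟩ = b} equals the union of the normal cones N(P,u) over all extreme points u of P contained in F. -/
/-!
For a direction `u`, take an extreme point that maximizes `u` and, among the maximizers,
minimizes `⟨a,·⟩`. Such a point exists on every nonempty compact set, by the Krein–Milman lemma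
applied to the exposed face of maximizers. Taken in `P` it lies in `G`; taken in `Q` it lies on
the hyperplane `⟨a,x⟩ = b`.
-/

/-- The standard inner product on `ℝ^d`. -/
def dotp {d : ℕ} (u v : Fin d → ℝ) : ℝ := ∑ t, u t * v t

/-- The normal cone of `X ⊆ ℝ^d` at a point `v`. -/
def normalCone {d : ℕ} (X : Set (Fin d → ℝ)) (v : Fin d → ℝ) : Set (Fin d → ℝ) :=
  {u | ∀ y ∈ X, dotp u y ≤ dotp u v}

section ExtremePoints

variable {E : Type*} [AddCommGroup E] [Module ℝ E] [TopologicalSpace E] [T2Space E]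
  [IsTopologicalAddGroup E] [ContinuousSMul ℝ E] [LocallyConvexSpace ℝ E] {K : Set E}

theorem IsCompact.exists_mem_extremePoints_isMaxOn (hK : IsCompact K) (hne : K.Nonempty)
    (f : E →L[ℝ] ℝ) : ∃ x ∈ K.extremePoints ℝ, IsMaxOn f K x := by
  have hexp := ContinuousLinearMap.toExposed.isExposed (l := f) (A := K)
  obtain ⟨x₀, hx₀K, hx₀⟩ := hK.exists_isMaxOn hne f.continuous.continuousOn
  obtain ⟨x, hx⟩ := (hexp.isCompact hK).extremePoints_nonempty ⟨x₀, hx₀K, hx₀⟩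
  exact ⟨x, hexp.isExtreme.extremePoints_subset_extremePoints hx, (extremePoints_subset hx).2⟩

theorem IsCompact.exists_mem_extremePoints_isMaxOn_isMinOn (hK : IsCompact K)
    (hne : K.Nonempty) (f g : E →L[ℝ] ℝ) :
    ∃ x ∈ K.extremePoints ℝ, IsMaxOn f K x ∧ IsMinOn g {y ∈ K | IsMaxOn f K y} x := by
  have hexp := ContinuousLinearMap.toExposed.isExposed (l := f) (A := K)
  obtain ⟨x₀, hx₀K, hx₀⟩ := hK.exists_isMaxOn hne f.continuous.continuousOn
  obtain ⟨x, hx, hxmax⟩ :=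
    (hexp.isCompact hK).exists_mem_extremePoints_isMaxOn ⟨x₀, hx₀K, hx₀⟩ (-g)
  exact ⟨x, hexp.isExtreme.extremePoints_subset_extremePoints hx, (extremePoints_subset hx).2,
    isMinOn_iff.2 fun y hy => neg_le_neg_iff.1 (isMaxOn_iff.1 hxmax y hy)⟩

theorem Set.Finite.convexHull_extremePoints_convexHull {V : Set E}
    (hV : V.Finite) : convexHull ℝ ((convexHull ℝ V).extremePoints ℝ) = convexHull ℝ V := by
  rw [← ((hV.subset extremePoints_convexHull_subset).isClosed_convexHull (𝕜 := ℝ)).closure_eq]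
  exact closure_convexHull_extremePoints (hV.isCompact_convexHull ℝ) (convex_convexHull ℝ V)

end ExtremePoints

section Truncation

variable {d : ℕ}

noncomputable def dotpCLM (u : Fin d → ℝ) : (Fin d → ℝ) →L[ℝ] ℝ :=
  LinearMap.toContinuousLinearMap
    { toFun := dotp u
      map_add' := dotProduct_add u
      map_smul' := fun c x => dotProduct_smul c u x }

theorem mem_normalCone_iff_isMaxOn {X : Set (Fin d → ℝ)} {u v : Fin d → ℝ} :
    u ∈ normalCone X v ↔ IsMaxOn (dotp u) X v :=
  isMaxOn_iff.symm

variable {P G Q : Set (Fin d → ℝ)} {a : Fin d → ℝ} {b : ℝ}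

/-- Take `w` maximizing `u` on `P` and, among such points, minimizing `a`. If `w ∉ G`, then
`w ∈ Q`, so `v` maximizes `u` on `P` as well, and `⟨a,v⟩ = b < ⟨a,w⟩` contradicts the choice. -/
theorem exists_mem_normalCone_of_mem_normalCone_truncation (hP : IsCompact P)
    (hsep : ∀ w ∈ P.extremePoints ℝ, w ∉ G → b < dotp a w)
    (hQ : Q = P ∩ {x | b ≤ dotp a x}) {u v : Fin d → ℝ} (hvQ : v ∈ Q) (hva : dotp a v = b)
    (hu : u ∈ normalCone Q v) :
    ∃ w ∈ P.extremePoints ℝ, w ∈ G ∧ u ∈ normalCone P w := by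
  subst hQ
  obtain ⟨w, hwP, hwmax, hwmin⟩ :=
    hP.exists_mem_extremePoints_isMaxOn_isMinOn ⟨v, hvQ.1⟩ (dotpCLM u) (dotpCLM a)
  refine ⟨w, hwP, ?_, mem_normalCone_iff_isMaxOn.2 hwmax⟩
  by_contra hwG
  have hwa := hsep w hwP hwG
  have hvmax : IsMaxOn (dotpCLM u) P v :=
    isMaxOn_iff.2 fun y hy => (isMaxOn_iff.1 hwmax y hy).trans
      (hu w ⟨extremePoints_subset hwP, hwa.le⟩)
  have hav : dotp a w ≤ dotp a v := isMinOn_iff.1 hwmin v ⟨hvQ.1, hvmax⟩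
  linarith

/-- Take `v ∈ Q` maximizing `u` on `Q` and, among such points, minimizing `a`. If `⟨a,v⟩ > b`,
the point of the segment `[w, v]` on the hyperplane is another maximizer, since `u` is maximal
on all of `P` at `w`. -/
theorem exists_mem_normalCone_truncation_of_mem_normalCone (hPc : IsCompact P)
    (hP : Convex ℝ P) (hQ : Q = P ∩ {x | b ≤ dotp a x}) (hQne : Q.Nonempty)
    {u w : Fin d → ℝ} (hwP : w ∈ P) (hwa : dotp a w < b) (hu : u ∈ normalCone P w) :
    ∃ v ∈ Q.extremePoints ℝ, dotp a v = b ∧ u ∈ normalCone Q v := by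
  have hQc : IsCompact Q :=
    hQ ▸ hPc.inter_right (isClosed_le continuous_const (dotpCLM a).continuous)
  obtain ⟨v, hvQ, hvmax, hvmin⟩ :=
    hQc.exists_mem_extremePoints_isMaxOn_isMinOn hQne (dotpCLM u) (dotpCLM a)
  refine ⟨v, hvQ, ?_, mem_normalCone_iff_isMaxOn.2 hvmax⟩
  have hvQ' : v ∈ Q := extremePoints_subset hvQ
  rw [hQ] at hvQ'
  refine le_antisymm (not_lt.1 fun hbv => ?_) hvQ'.2
  obtain ⟨z, hz, hza : dotp a z = b⟩ := (convex_segment w v).isPreconnected.intermediate_value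
    (left_mem_segment ℝ w v) (right_mem_segment ℝ w v) (dotpCLM a).continuous.continuousOn
    ⟨hwa.le, hbv.le⟩
  have hzQ : z ∈ Q := hQ ▸ ⟨hP.segment_subset hwP hvQ'.1 hz, hza.ge⟩
  have hzu : dotp u v ≤ dotp u z :=
    (convex_halfSpace_ge (dotpCLM u).isLinear (dotp u v)).segment_subset (hu v hvQ'.1)
      (le_refl (dotp u v)) hz
  have hzmax : IsMaxOn (dotpCLM u) Q z :=
    isMaxOn_iff.2 fun y hy => (isMaxOn_iff.1 hvmax y hy).trans hzu
  have hvz : dotp a v ≤ dotp a z := isMinOn_iff.1 hvmin z ⟨hzQ, hzmax⟩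
  linarith

end Truncation

theorem stmt_10_general (d : ℕ) (V : Set (Fin d → ℝ)) (hV : V.Finite)
    (P : Set (Fin d → ℝ)) (hP : P = convexHull ℝ V)
    (G : Set (Fin d → ℝ)) (hG : IsExposed ℝ P G) (hGP : G ≠ P)
    (a : Fin d → ℝ) (b : ℝ)
    (hsep : ∀ v ∈ P.extremePoints ℝ,
      (v ∈ G → dotp a v < b) ∧ (v ∉ G → b < dotp a v))
    (Q : Set (Fin d → ℝ)) (hQ : Q = P ∩ {x | b ≤ dotp a x}) :
    {u | ∃ v, v ∈ Q.extremePoints ℝ ∧ dotp a v = b ∧ u ∈ normalCone Q v} =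
      {u | ∃ w, w ∈ P.extremePoints ℝ ∧ w ∈ G ∧ u ∈ normalCone P w} := by
  have hPc : IsCompact P := hP ▸ hV.isCompact_convexHull ℝ
  have hPconv : Convex ℝ P := hP ▸ convex_convexHull ℝ V
  obtain ⟨s, hsP, hsG⟩ : ∃ s ∈ P.extremePoints ℝ, s ∉ G := by
    by_contra! h
    refine hGP (hG.subset.antisymm ?_)
    rw [hP, ← hV.convexHull_extremePoints_convexHull, ← hP]
    exact convexHull_min h (hG.convex hPconv)
  have hQne : Q.Nonempty := ⟨s, hQ ▸ ⟨extremePoints_subset hsP, ((hsep s hsP).2 hsG).le⟩⟩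
  ext u
  constructor
  · rintro ⟨v, hvQ, hva, hu⟩
    exact exists_mem_normalCone_of_mem_normalCone_truncation hPc (fun w hw => (hsep w hw).2) hQ
      (extremePoints_subset hvQ) hva hu
  · rintro ⟨w, hwP, hwG, hu⟩
    exact exists_mem_normalCone_truncation_of_mem_normalCone hPc hPconv hQ hQne
      (extremePoints_subset hwP) ((hsep w hwP).1 hwG) hu

/-- for a truncation `Q = P ∩ {x : ⟨a,x⟩ ≥ b}` of a polytope `P` in a
proper nonempty exposed face `G`, the union of the normal cones of `Q` at its extreme
points lying on the truncating hyperplane equals the union of the normal cones of `P`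
at its extreme points contained in `G`. -/
theorem stmt_10 (d : ℕ) (V : Set (Fin d → ℝ)) (hV : V.Finite) (hVne : V.Nonempty)
    (P : Set (Fin d → ℝ)) (hP : P = convexHull ℝ V)
    (G : Set (Fin d → ℝ)) (hG : IsExposed ℝ P G) (hGne : G.Nonempty) (hGP : G ≠ P)
    (a : Fin d → ℝ) (b : ℝ)
    (hsep : ∀ v ∈ P.extremePoints ℝ,
      (v ∈ G → dotp a v < b) ∧ (v ∉ G → b < dotp a v))
    (Q : Set (Fin d → ℝ)) (hQ : Q = P ∩ {x | b ≤ dotp a x}) :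
    {u | ∃ v, v ∈ Q.extremePoints ℝ ∧ dotp a v = b ∧ u ∈ normalCone Q v} =
      {u | ∃ w, w ∈ P.extremePoints ℝ ∧ w ∈ G ∧ u ∈ normalCone P w} :=
  stmt_10_general d V hV P hP G hG hGP a b hsep Q hQ
end

section
/- The convex hull in ℝ^3 of the twelve points obtained by permuting the coordinates of (1,5,13) and of (2,3,14) equals the set { x ∈ ℝ^3 : x_1 + x_2 + x_3 = 19, and for every ordered pair (i,j) of distinct elements of {1,2,3}: x_j ≥ 1, x_i + x_j ≥ 5, and x_i + 2x_j ≥ 7 }. -/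
/-!
Both sides are invariant under permuting coordinates, so it suffices to show that every
point `x` of the halfspace description with `x 0 ≤ x 1 ≤ x 2` lies in the hull. Writing
`x 2 = 19 - x 0 - x 1`, this sorted region is covered by the three triangles with vertices
`(1,13,5), (1,5,13), (13,5,1)` (where `5 ≤ x 1`), `(1,5,13), (2,3,14), (3,2,14)`
(where `3 x 0 + 2 x 1 ≤ 13`) and `(1,5,13), (3,2,14), (13,5,1)` (the rest), all of whose
vertices are permutations of `(1,5,13)` or `(2,3,14)`.
-/

open Set

section PermInvariant

variable {ι R : Type*}

def PermInvariant (S : Set (ι → R)) : Prop :=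
  ∀ (σ : Equiv.Perm ι), ∀ w ∈ S, w ∘ σ ∈ S

def permOrbit (v : ι → R) : Set (ι → R) :=
  range fun σ : Equiv.Perm ι => v ∘ σ

theorem permInvariant_permOrbit (v : ι → R) : PermInvariant (permOrbit v) := by
  rintro σ _ ⟨τ, rfl⟩
  exact ⟨τ * σ, rfl⟩

theorem PermInvariant.union {S T : Set (ι → R)} (hS : PermInvariant S)
    (hT : PermInvariant T) : PermInvariant (S ∪ T) := by
  rintro σ w (hw | hw)
  exacts [Or.inl (hS σ w hw), Or.inr (hT σ w hw)]

theorem PermInvariant.convexHull {𝕜 : Type*} [Field 𝕜] [LinearOrder 𝕜]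
    [IsStrictOrderedRing 𝕜] {S : Set (ι → 𝕜)} (hS : PermInvariant S) :
    PermInvariant (convexHull 𝕜 S) := fun σ =>
  convexHull_min (fun w hw => subset_convexHull 𝕜 S (hS σ w hw))
    ((convex_convexHull 𝕜 S).is_linear_preimage (LinearMap.funLeft 𝕜 𝕜 σ).isLinear)

end PermInvariant

theorem Convex.smul_add_smul_add_smul_mem {𝕜 E : Type*} [Field 𝕜] [LinearOrder 𝕜]
    [IsStrictOrderedRing 𝕜] [AddCommGroup E] [Module 𝕜 E] {s : Set E} (hs : Convex 𝕜 s)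
    {p q r : E} (hp : p ∈ s) (hq : q ∈ s) (hr : r ∈ s) {a b c : 𝕜}
    (ha : 0 ≤ a) (hb : 0 ≤ b) (hc : 0 ≤ c) (habc : a + b + c = 1) :
    a • p + b • q + c • r ∈ s := by
  have h := hs.sum_mem (t := Finset.univ) (w := ![a, b, c]) (z := ![p, q, r])
    (by simp [Fin.forall_fin_succ, ha, hb, hc]) (by simpa [Fin.sum_univ_three] using habc)
    (by simp [Fin.forall_fin_succ, hp, hq, hr])
  simpa [Fin.sum_univ_three] using h

def dodecagonVertices : Set (Fin 3 → ℝ) :=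
  permOrbit ![1, 5, 13] ∪ permOrbit ![2, 3, 14]

theorem permInvariant_dodecagonVertices : PermInvariant dodecagonVertices :=
  (permInvariant_permOrbit _).union (permInvariant_permOrbit _)

def dodecagonHalfspaces : Set (Fin 3 → ℝ) :=
  {x | x 0 + x 1 + x 2 = 19 ∧
    ∀ i j : Fin 3, i ≠ j → 1 ≤ x j ∧ 5 ≤ x i + x j ∧ 7 ≤ x i + 2 * x j}

theorem permInvariant_dodecagonHalfspaces : PermInvariant dodecagonHalfspaces := by
  rintro σ x ⟨hsum, hineq⟩
  refine ⟨?_, fun i j hij => hineq (σ i) (σ j) (σ.injective.ne hij)⟩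
  have h := Equiv.sum_comp σ x
  simp only [Fin.sum_univ_three] at h
  simpa only [Function.comp_apply, h] using hsum

theorem convex_dodecagonHalfspaces : Convex ℝ dodecagonHalfspaces := by
  rintro y ⟨hy, hy'⟩ z ⟨hz, hz'⟩ a b ha hb hab
  simp only [dodecagonHalfspaces, mem_ofPred_eq, Pi.add_apply, Pi.smul_apply, smul_eq_mul]
  refine ⟨by linear_combination a * hy + b * hz + 19 * hab, fun i j hij => ?_⟩
  obtain ⟨hy1, hy5, hy7⟩ := hy' i j hij
  obtain ⟨hz1, hz5, hz7⟩ := hz' i j hij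
  refine ⟨?_, ?_, ?_⟩ <;> nlinarith

theorem dodecagonVertices_subset_dodecagonHalfspaces :
    dodecagonVertices ⊆ dodecagonHalfspaces := by
  have vertex : ∀ v : Fin 3 → ℝ, (v = ![1, 5, 13] ∨ v = ![2, 3, 14]) →
      v ∈ dodecagonHalfspaces := by
    rintro _ (rfl | rfl) <;> refine ⟨by simp; norm_num, fun i j hij => ?_⟩ <;>
      fin_cases i <;> fin_cases j <;> simp at hij ⊢ <;> norm_num
  rintro _ (⟨σ, rfl⟩ | ⟨σ, rfl⟩)
  exacts [permInvariant_dodecagonHalfspaces σ _ (vertex _ (.inl rfl)),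
    permInvariant_dodecagonHalfspaces σ _ (vertex _ (.inr rfl))]

theorem mem_convexHull_dodecagonVertices_of_monotone {x : Fin 3 → ℝ}
    (hx : x ∈ dodecagonHalfspaces) (hmono : Monotone x) :
    x ∈ convexHull ℝ dodecagonVertices := by
  obtain ⟨hsum, hineq⟩ := hx
  have h01 : x 0 ≤ x 1 := hmono (by decide)
  have h12 : x 1 ≤ x 2 := hmono (by decide)
  obtain ⟨h1, h5, h7⟩ := hineq 1 0 (by decide)
  have B : ![1, 5, 13] ∈ convexHull ℝ dodecagonVertices :=
    subset_convexHull ℝ _ (.inl ⟨1, rfl⟩)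
  have B' : ![1, 13, 5] ∈ convexHull ℝ dodecagonVertices :=
    subset_convexHull ℝ _ (.inl ⟨Equiv.swap 1 2, by ext i; fin_cases i <;> rfl⟩)
  have E : ![13, 5, 1] ∈ convexHull ℝ dodecagonVertices :=
    subset_convexHull ℝ _ (.inl ⟨Equiv.swap 0 2, by ext i; fin_cases i <;> rfl⟩)
  have C : ![2, 3, 14] ∈ convexHull ℝ dodecagonVertices :=
    subset_convexHull ℝ _ (.inr ⟨1, rfl⟩)
  have C' : ![3, 2, 14] ∈ convexHull ℝ dodecagonVertices :=
    subset_convexHull ℝ _ (.inr ⟨Equiv.swap 0 1, by ext i; fin_cases i <;> rfl⟩)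
  have hull := convex_convexHull ℝ dodecagonVertices
  rcases le_total 5 (x 1) with hx1 | hx1
  · convert hull.smul_add_smul_add_smul_mem B' B E
      (a := (x 1 - 5) / 8) (b := 1 - (x 1 - 5) / 8 - (x 0 - 1) / 12) (c := (x 0 - 1) / 12)
      (by linarith) (by linarith) (by linarith) (by ring)
    ext i; fin_cases i <;> simp <;> linarith
  rcases le_total (3 * x 0 + 2 * x 1) 13 with hx01 | hx01
  · convert hull.smul_add_smul_add_smul_mem B C C'
      (a := x 0 + x 1 - 5) (b := 13 - 3 * x 0 - 2 * x 1) (c := 2 * x 0 + x 1 - 7)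
      (by linarith) (by linarith) (by linarith) (by ring)
    ext i; fin_cases i <;> simp <;> linarith
  · convert hull.smul_add_smul_add_smul_mem B C' E
      (a := 1 - (5 - x 1) / 3 - (3 * x 0 + 2 * x 1 - 13) / 36) (b := (5 - x 1) / 3)
      (c := (3 * x 0 + 2 * x 1 - 13) / 36) (by linarith) (by linarith) (by linarith) (by ring)
    ext i; fin_cases i <;> simp <;> linarith

/-- the convex hull of the twelve points obtained by permuting the
coordinates of `(1,5,13)` and of `(2,3,14)` equals
`{x ∈ ℝ³ : x₁+x₂+x₃ = 19, and for all i ≠ j: x_j ≥ 1, x_i + x_j ≥ 5, x_i + 2x_j ≥ 7}`. -/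
theorem stmt_14 :
    convexHull ℝ
        (Set.range (fun σ : Equiv.Perm (Fin 3) => ![(1 : ℝ), 5, 13] ∘ σ) ∪
          Set.range (fun σ : Equiv.Perm (Fin 3) => ![(2 : ℝ), 3, 14] ∘ σ)) =
      {x : Fin 3 → ℝ | x 0 + x 1 + x 2 = 19 ∧
        ∀ i j : Fin 3, i ≠ j →
          1 ≤ x j ∧ 5 ≤ x i + x j ∧ 7 ≤ x i + 2 * x j} := by
  change convexHull ℝ dodecagonVertices = dodecagonHalfspaces
  refine (convexHull_min dodecagonVertices_subset_dodecagonHalfspaces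
    convex_dodecagonHalfspaces).antisymm fun x hx => ?_
  have hsorted := mem_convexHull_dodecagonVertices_of_monotone
    (permInvariant_dodecagonHalfspaces (Tuple.sort x) x hx) (Tuple.monotone_sort x)
  simpa [Function.comp_assoc] using
    permInvariant_dodecagonVertices.convexHull (Tuple.sort x)⁻¹ _ hsorted
end
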